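/- arXiv:1407.2178 — 7 statements merged into one kernel-verified Lean document; each statement's English description precedes it below -/
import Mathlib

section
/- Let A be an m × n matrix with the (k,D)-RIP-p property, p ∈ [1,∞). For each row i let b_{i,t} denote the t-th largest absolute value among |A_{i,1}|,…,|A_{i,n}|. Then for every i and every t ≤ k one has b_{i,t} ≤ D · t^{1/p - 1}, and for t > k one has b_{i,t} ≤ D · k^{1/p - 1}. -/
lemma rip_aux_sign_mul (a : ℝ) : a * Real.sign a = |a| := by
  rcases lt_trichotomy a 0 with h | h | h
  · rw [Real.sign_of_neg h, abs_of_neg h]; ring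
  · simp [h]
  · rw [Real.sign_of_pos h, abs_of_pos h]; ring

lemma rip_aux_abs_sign_le (a : ℝ) : |Real.sign a| ≤ 1 := by
  rcases Real.sign_apply_eq a with h | h | h <;> rw [h] <;> norm_num

lemma rip_aux_key (m n k : ℕ) (p D : ℝ) (hp : 1 ≤ p) (hD : 0 ≤ D)
    (A : Matrix (Fin m) (Fin n) ℝ)
    (hRIP : ∀ x : Fin n → ℝ, Set.ncard {i | x i ≠ 0} ≤ k →
      (∑ i, |x i| ^ p) ^ (1 / p) ≤ (∑ i, |A.mulVec x i| ^ p) ^ (1 / p) ∧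
      (∑ i, |A.mulVec x i| ^ p) ^ (1 / p) ≤ D * (∑ i, |x i| ^ p) ^ (1 / p))
    (b : Fin m → Fin n → ℝ)
    (hperm : ∀ i : Fin m, ∃ σ : Equiv.Perm (Fin n), ∀ t : Fin n, b i t = |A i (σ t)|)
    (hsort : ∀ i : Fin m, Antitone (b i))
    (i : Fin m) (t : Fin n) (s : ℕ) (hs1 : 1 ≤ s) (hsk : s ≤ k) (hst : s ≤ (t : ℕ) + 1) :
    b i t ≤ D * (s : ℝ) ^ (1 / p - 1) := by
  have hp0 : 0 < p := lt_of_lt_of_le one_pos hp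
  have hps : (0:ℝ) < 1 / p := by positivity
  obtain ⟨σ, hσ⟩ := hperm i
  have hbt0 : 0 ≤ b i t := by rw [hσ t]; exact abs_nonneg _
  have hsn : s ≤ n := hst.trans t.isLt
  set x : Fin n → ℝ := fun j => if ((σ.symm j : ℕ) < s) then Real.sign (A i j) else 0 with hx
  -- support bound
  have hcard_le : (Finset.univ.filter fun j : Fin n => ((σ.symm j : ℕ) < s)).card ≤ s := by
    have h := Finset.card_le_card_of_injOn
      (s := Finset.univ.filter fun j : Fin n => ((σ.symm j : ℕ) < s))
      (t := Finset.range s)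
      (fun j => ((σ.symm j : ℕ)))
      (fun j hj => Finset.mem_range.mpr (Finset.mem_filter.mp hj).2)
      (fun a _ c _ h => σ.symm.injective (Fin.val_injective h))
    simpa using h
  have hsupp : Set.ncard {j | x j ≠ 0} ≤ k := by
    have hsub : {j | x j ≠ 0} ⊆ {j | ((σ.symm j : ℕ) < s)} := by
      intro j hj
      by_contra hc
      exact hj (if_neg hc)
    have h1 : Set.ncard {j | ((σ.symm j : ℕ) < s)}
        = (Finset.univ.filter fun j : Fin n => ((σ.symm j : ℕ) < s)).card := by
      rw [Set.ncard_eq_toFinset_card']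
      congr 1
      ext j
      simp
    calc Set.ncard {j | x j ≠ 0} ≤ Set.ncard {j | ((σ.symm j : ℕ) < s)} :=
          Set.ncard_le_ncard hsub (Set.toFinite _)
      _ ≤ s := by rw [h1]; exact hcard_le
      _ ≤ k := hsk
  obtain ⟨_, hub⟩ := hRIP x hsupp
  -- ∑ |x j|^p ≤ s
  have hxsum : ∑ j, |x j| ^ p ≤ (s : ℝ) := by
    have hterm : ∀ j : Fin n, |x j| ^ p ≤ if ((σ.symm j : ℕ) < s) then (1:ℝ) else 0 := by
      intro j
      by_cases hj : ((σ.symm j : ℕ) < s)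
      · simp only [hx, if_pos hj]
        exact Real.rpow_le_one (abs_nonneg _) (rip_aux_abs_sign_le _) hp0.le
      · simp [hx, if_neg hj, Real.zero_rpow hp0.ne']
    calc ∑ j, |x j| ^ p ≤ ∑ j, if ((σ.symm j : ℕ) < s) then (1:ℝ) else 0 :=
          Finset.sum_le_sum fun j _ => hterm j
      _ = ((Finset.univ.filter fun j : Fin n => ((σ.symm j : ℕ) < s)).card : ℝ) := by
          rw [← Finset.sum_filter, Finset.sum_const, nsmul_eq_mul, mul_one]
      _ ≤ (s : ℝ) := by exact_mod_cast hcard_le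
  -- A.mulVec x i = ∑ over l < s of b i l
  have hmv : A.mulVec x i = ∑ l : Fin n, if ((l : ℕ) < s) then b i l else 0 := by
    rw [Matrix.mulVec, dotProduct]
    rw [← Equiv.sum_comp σ (fun j => A i j * x j)]
    refine Finset.sum_congr rfl fun l _ => ?_
    simp only [hx, Equiv.symm_apply_apply]
    by_cases hl : ((l : ℕ) < s)
    · rw [if_pos hl, if_pos hl, rip_aux_sign_mul, hσ l]
    · rw [if_neg hl, if_neg hl, mul_zero]
  -- lower bound on A.mulVec x i
  have hlow : (s : ℝ) * b i t ≤ A.mulVec x i := by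
    rw [hmv]
    have hcard : s ≤ (Finset.univ.filter fun l : Fin n => ((l : ℕ) < s)).card := by
      have himg : Finset.range s
          = (Finset.univ.filter fun l : Fin n => ((l : ℕ) < s)).image Fin.val := by
        ext a
        simp only [Finset.mem_range, Finset.mem_image, Finset.mem_filter, Finset.mem_univ,
          true_and]
        constructor
        · intro ha; exact ⟨⟨a, lt_of_lt_of_le ha hsn⟩, ha, rfl⟩
        · rintro ⟨l, hl, rfl⟩; exact hl
      calc s = (Finset.range s).card := (Finset.card_range s).symm
        _ ≤ _ := by rw [himg]; exact Finset.card_image_le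
    calc (s : ℝ) * b i t
        ≤ ((Finset.univ.filter fun l : Fin n => ((l : ℕ) < s)).card : ℝ) * b i t := by
          apply mul_le_mul_of_nonneg_right _ hbt0
          exact_mod_cast hcard
      _ = ∑ l ∈ Finset.univ.filter (fun l : Fin n => ((l : ℕ) < s)), b i t := by
          rw [Finset.sum_const, nsmul_eq_mul]
      _ ≤ ∑ l ∈ Finset.univ.filter (fun l : Fin n => ((l : ℕ) < s)), b i l := by
          refine Finset.sum_le_sum fun l hl => ?_
          have hls : (l : ℕ) < s := by simpa using hl
          exact hsort i (by rw [Fin.le_def]; omega)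
      _ = ∑ l : Fin n, if ((l : ℕ) < s) then b i l else 0 := by
          rw [← Finset.sum_filter]
  -- chain
  have hkey : (s : ℝ) * b i t ≤ D * (s : ℝ) ^ (1 / p) := by
    have h1 : (s : ℝ) * b i t ≤ (|A.mulVec x i| ^ p) ^ (1 / p) := by
      have : (|A.mulVec x i| ^ p) ^ (1 / p) = |A.mulVec x i| := by
        rw [← Real.rpow_mul (abs_nonneg _), mul_one_div, div_self hp0.ne', Real.rpow_one]
      rw [this]
      exact hlow.trans (le_abs_self _)
    have h2 : (|A.mulVec x i| ^ p) ^ (1 / p) ≤ (∑ i', |A.mulVec x i'| ^ p) ^ (1 / p) := by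
      apply Real.rpow_le_rpow (by positivity) _ hps.le
      exact Finset.single_le_sum (f := fun i' => |A.mulVec x i'| ^ p)
        (fun i' _ => by positivity) (Finset.mem_univ i)
    have h3 : (∑ j, |x j| ^ p) ^ (1 / p) ≤ (s : ℝ) ^ (1 / p) :=
      Real.rpow_le_rpow (by positivity) hxsum hps.le
    calc (s : ℝ) * b i t ≤ (∑ i', |A.mulVec x i'| ^ p) ^ (1 / p) := h1.trans h2
      _ ≤ D * (∑ j, |x j| ^ p) ^ (1 / p) := hub
      _ ≤ D * (s : ℝ) ^ (1 / p) := mul_le_mul_of_nonneg_left h3 hD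
  have hspos : (0:ℝ) < (s : ℝ) := by exact_mod_cast hs1
  have : D * (s : ℝ) ^ (1 / p - 1) = D * (s : ℝ) ^ (1 / p) / (s : ℝ) := by
    rw [Real.rpow_sub hspos, Real.rpow_one]; ring
  rw [this, le_div_iff₀ hspos, mul_comm (b i t)]
  exact hkey

/-- Sorted-row bound for RIP matrices: if `A` is `(k,D)`-RIP-`p` and `b i t` is the
`t`-th largest absolute value in row `i` (here indexed from `0`, so rank `t+1`), then
`b i t ≤ D · (t+1)^(1/p - 1)` for `t+1 ≤ k` and `b i t ≤ D · k^(1/p - 1)` for `t+1 > k`. -/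
theorem rip_sorted_row_bound (m n k : ℕ) (hk : 1 ≤ k) (p D : ℝ) (hp : 1 ≤ p) (hD : 1 < D)
    (A : Matrix (Fin m) (Fin n) ℝ)
    (hRIP : ∀ x : Fin n → ℝ, Set.ncard {i | x i ≠ 0} ≤ k →
      (∑ i, |x i| ^ p) ^ (1 / p) ≤ (∑ i, |A.mulVec x i| ^ p) ^ (1 / p) ∧
      (∑ i, |A.mulVec x i| ^ p) ^ (1 / p) ≤ D * (∑ i, |x i| ^ p) ^ (1 / p))
    (b : Fin m → Fin n → ℝ)
    (hperm : ∀ i : Fin m, ∃ σ : Equiv.Perm (Fin n), ∀ t : Fin n, b i t = |A i (σ t)|)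
    (hsort : ∀ i : Fin m, Antitone (b i)) :
    ∀ (i : Fin m) (t : Fin n),
      ((t : ℕ) + 1 ≤ k → b i t ≤ D * (((t : ℕ) + 1 : ℝ)) ^ (1 / p - 1)) ∧
      (k < (t : ℕ) + 1 → b i t ≤ D * (k : ℝ) ^ (1 / p - 1)) := by
  intro i t
  constructor
  · intro h
    have := rip_aux_key m n k p D hp (zero_le_one.trans hD.le) A hRIP b hperm hsort i t ((t : ℕ) + 1)
      (by omega) h (le_refl _)
    simpa using this
  · intro h
    exact rip_aux_key m n k p D hp (zero_le_one.trans hD.le) A hRIP b hperm hsort i t k hk (le_refl _) h.le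
end

section
/- Let A be an m × n matrix with the (k,D)-RIP-p property. If 1 < p ≤ 2 then Σ_{i,j} A_{i,j}^2 ≥ n · (k/m)^{2/p - 1}; if p ≥ 2 then Σ_{i,j} A_{i,j}^2 ≤ n · D^2 · (k/m)^{2/p - 1}. -/
/-!
Fix a `k`-subset `U` of columns and average `‖A x‖_p^p` over the sign vectors `x ∈ {±1}^U`
(extended by zero). In row `i`, `⟨A_i, x⟩²` has mean `s_i = ∑_{j ∈ U} A_{ij}²`, so Jensen for
`t ↦ t^(p/2)` (concave for `p ≤ 2`, convex for `p ≥ 2`) compares that average with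
`∑_i s_i^(p/2)`, and the power-mean inequality over the `m` rows compares this in turn with
`m (∑_i s_i / m)^(p/2)`. As `‖x‖_p^p = k`, the RIP property bounds the average below by `k` and
above by `D^p k`, which bounds the mass `∑_i s_i` of the columns in `U`. Every column lies in
exactly `k` of the `n` cyclic translates of a fixed `k`-subset of `Fin n`, so summing over these
translates gives the bound for the whole matrix.
-/

open Finset

section PowerMean

variable {ι : Type*} [Fintype ι] [Nonempty ι] {a : ι → ℝ} {q : ℝ}

theorem sum_inv_card_eq_one : ∑ _i : ι, ((Fintype.card ι : ℝ))⁻¹ = 1 := by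
  rw [sum_const, card_univ, nsmul_eq_mul, mul_inv_cancel₀ (by positivity)]

theorem card_mul_rpow_avg_le_sum_rpow (ha : 0 ≤ a) (hq : 1 ≤ q) :
    Fintype.card ι * ((∑ i, a i) / Fintype.card ι) ^ q ≤ ∑ i, a i ^ q := by
  have hN : (0 : ℝ) < Fintype.card ι := by positivity
  have h := Real.rpow_arith_mean_le_arith_mean_rpow univ (fun _ => (Fintype.card ι : ℝ)⁻¹) a
    (fun _ _ => by positivity) sum_inv_card_eq_one (fun i _ => ha i) hq
  rw [← mul_sum, ← mul_sum, inv_mul_eq_div, inv_mul_eq_div] at h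
  rwa [← le_div_iff₀' hN]

theorem sum_rpow_le_card_mul_rpow_avg (ha : 0 ≤ a) (hq0 : 0 < q) (hq1 : q ≤ 1) :
    ∑ i, a i ^ q ≤ Fintype.card ι * ((∑ i, a i) / Fintype.card ι) ^ q := by
  have hN : (0 : ℝ) < Fintype.card ι := by positivity
  have h := Real.arith_mean_le_rpow_mean univ (fun _ => (Fintype.card ι : ℝ)⁻¹) (fun i => a i ^ q)
    (fun _ _ => by positivity) sum_inv_card_eq_one (fun i _ => Real.rpow_nonneg (ha i) q)
    (one_le_one_div hq0 hq1)
  simp only [← Real.rpow_mul (ha _), mul_one_div_cancel hq0.ne', Real.rpow_one, one_div_one_div,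
    inv_mul_eq_div, ← sum_div] at h
  rwa [← div_le_iff₀' hN]

end PowerMean

section Signs

variable {κ : Type*} [Fintype κ] [DecidableEq κ]

theorem sum_units_mul_units_eq_zero {j j' : κ} (h : j ≠ j') :
    ∑ σ : κ → ℤˣ, ((σ j : ℤ) : ℝ) * (σ j' : ℤ) = 0 := by
  -- flipping the sign at `j` permutes the sign vectors and negates every term
  set τ : κ → ℤˣ := Pi.mulSingle j (-1)
  have hflip : ∀ σ : κ → ℤˣ, (((τ * σ) j : ℤ) : ℝ) * ((τ * σ) j' : ℤ) =
      -(((σ j : ℤ) : ℝ) * (σ j' : ℤ)) := by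
    intro σ
    simp [τ, Pi.mulSingle_eq_of_ne h.symm]
  have := Equiv.sum_comp (Equiv.mulLeft τ) fun σ => ((σ j : ℤ) : ℝ) * (σ j' : ℤ)
  simp only [Equiv.coe_mulLeft, hflip, sum_neg_distrib] at this
  linarith

theorem sum_sq_sum_mul_units (U : Finset κ) (b : κ → ℝ) :
    ∑ σ : κ → ℤˣ, (∑ j ∈ U, b j * (σ j : ℤ)) ^ 2 =
      Fintype.card (κ → ℤˣ) * ∑ j ∈ U, b j ^ 2 := by
  have hpair : ∀ j j', ∑ σ : κ → ℤˣ, b j * (σ j : ℤ) * (b j' * (σ j' : ℤ)) =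
      if j = j' then Fintype.card (κ → ℤˣ) * b j ^ 2 else 0 := by
    intro j j'
    split_ifs with h
    · subst h
      have hsq : ∀ u : ℤˣ, ((u : ℤ) : ℝ) * (u : ℤ) = 1 := fun u => by
        rcases Int.units_eq_one_or u with rfl | rfl <;> norm_num
      simp only [mul_mul_mul_comm, hsq, mul_one, sum_const, card_univ, nsmul_eq_mul]
      ring
    · simp_rw [mul_mul_mul_comm, ← mul_sum, sum_units_mul_units_eq_zero h, mul_zero]
  simp_rw [sq, sum_mul_sum]
  rw [sum_comm]
  simp_rw [sum_comm (s := univ), hpair, sum_ite_eq, mul_sum]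
  exact sum_congr rfl fun j hj => by simp [hj, sq]

theorem sum_abs_sum_mul_units_rpow_le {p : ℝ} (hp0 : 0 < p) (hp2 : p ≤ 2) (U : Finset κ)
    (b : κ → ℝ) :
    ∑ σ : κ → ℤˣ, |∑ j ∈ U, b j * (σ j : ℤ)| ^ p ≤
      Fintype.card (κ → ℤˣ) * (∑ j ∈ U, b j ^ 2) ^ (p / 2) := by
  have hN : (0 : ℝ) < Fintype.card (κ → ℤˣ) := by positivity
  calc ∑ σ : κ → ℤˣ, |∑ j ∈ U, b j * (σ j : ℤ)| ^ p
      = ∑ σ : κ → ℤˣ, ((∑ j ∈ U, b j * (σ j : ℤ)) ^ 2) ^ (p / 2) := by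
        simp_rw [Real.rpow_div_two_eq_sqrt _ (sq_nonneg _), Real.sqrt_sq_eq_abs]
    _ ≤ _ := sum_rpow_le_card_mul_rpow_avg (fun _ => sq_nonneg _) (by positivity) (by linarith)
    _ = _ := by rw [sum_sq_sum_mul_units, mul_div_cancel_left₀ _ hN.ne']

theorem card_mul_rpow_le_sum_abs_sum_mul_units_rpow {p : ℝ} (hp2 : 2 ≤ p) (U : Finset κ)
    (b : κ → ℝ) :
    Fintype.card (κ → ℤˣ) * (∑ j ∈ U, b j ^ 2) ^ (p / 2) ≤
      ∑ σ : κ → ℤˣ, |∑ j ∈ U, b j * (σ j : ℤ)| ^ p := by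
  have hN : (0 : ℝ) < Fintype.card (κ → ℤˣ) := by positivity
  calc _ = Fintype.card (κ → ℤˣ) *
        ((∑ σ : κ → ℤˣ, (∑ j ∈ U, b j * (σ j : ℤ)) ^ 2) / Fintype.card (κ → ℤˣ)) ^ (p / 2) := by
        rw [sum_sq_sum_mul_units, mul_div_cancel_left₀ _ hN.ne']
    _ ≤ ∑ σ : κ → ℤˣ, ((∑ j ∈ U, b j * (σ j : ℤ)) ^ 2) ^ (p / 2) :=
        card_mul_rpow_avg_le_sum_rpow (fun _ => sq_nonneg _) (by linarith)
    _ = _ := by simp_rw [Real.rpow_div_two_eq_sqrt _ (sq_nonneg _), Real.sqrt_sq_eq_abs]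

end Signs

section SignVector

variable {κ : Type*} [DecidableEq κ]

def signVector (U : Finset κ) (σ : κ → ℤˣ) : κ → ℝ := fun j => if j ∈ U then ((σ j : ℤ) : ℝ) else 0

variable (U : Finset κ) (σ : κ → ℤˣ)

theorem ncard_support_signVector_le : {j | signVector U σ j ≠ 0}.ncard ≤ #U := by
  rw [← Set.ncard_coe_finset U]
  refine Set.ncard_le_ncard (fun j hj => ?_) U.finite_toSet
  by_contra hjU
  exact hj (if_neg hjU)

theorem sum_abs_signVector_rpow [Fintype κ] {p : ℝ} (hp : 0 < p) :
    ∑ j, |signVector U σ j| ^ p = #U := by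
  have hterm : ∀ j, |signVector U σ j| ^ p = if j ∈ U then 1 else 0 := fun j => by
    by_cases hj : j ∈ U
    · rcases Int.units_eq_one_or (σ j) with h | h <;> simp [signVector, hj, h]
    · simp [signVector, hj, Real.zero_rpow hp.ne']
  simp [hterm]

theorem mulVec_signVector [Fintype κ] {ι : Type*} (A : Matrix ι κ ℝ) (i : ι) :
    A.mulVec (signVector U σ) i = ∑ j ∈ U, A i j * (σ j : ℤ) := by
  simp [Matrix.mulVec, dotProduct, signVector, mul_ite, sum_ite_mem]

end SignVector

theorem le_mul_div_rpow_iff {m c S q : ℝ} (hm : 0 < m) (hc : 0 ≤ c) (hS : 0 ≤ S) (hq : 0 < q) :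
    c ≤ m * (S / m) ^ q ↔ m * (c / m) ^ q⁻¹ ≤ S := by
  rw [← div_le_iff₀' hm, ← le_div_iff₀' hm,
    Real.rpow_inv_le_iff_of_pos (by positivity) (by positivity) hq]

theorem mul_div_rpow_le_iff {m c S q : ℝ} (hm : 0 < m) (hc : 0 ≤ c) (hS : 0 ≤ S) (hq : 0 < q) :
    m * (S / m) ^ q ≤ c ↔ S ≤ m * (c / m) ^ q⁻¹ := by
  rw [← le_div_iff₀' hm, ← div_le_iff₀' hm,
    Real.le_rpow_inv_iff_of_pos (by positivity) (by positivity) hq]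

theorem rpow_one_div_le_mul_rpow_one_div_iff {a b D p : ℝ} (ha : 0 ≤ a) (hb : 0 ≤ b) (hD : 0 ≤ D)
    (hp : 0 < p) : a ^ (1 / p) ≤ D * b ^ (1 / p) ↔ a ≤ D ^ p * b := by
  rw [← Real.rpow_le_rpow_iff (z := 1 / p) ha (by positivity) (by positivity), Real.mul_rpow
    (by positivity) hb, one_div, Real.rpow_rpow_inv hD hp.ne']

section SubsetBounds

variable {ι κ : Type*} [Fintype ι] [Fintype κ] [DecidableEq κ] (A : Matrix ι κ ℝ) (U : Finset κ)
  {p : ℝ}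

theorem card_le_sum_rpow_of_le_sum_abs_mulVec_signVector (hp0 : 0 < p) (hp2 : p ≤ 2)
    (hA : ∀ σ : κ → ℤˣ, (#U : ℝ) ≤ ∑ i, |A.mulVec (signVector U σ) i| ^ p) :
    (#U : ℝ) ≤ ∑ i, (∑ j ∈ U, A i j ^ 2) ^ (p / 2) := by
  have hN : (0 : ℝ) < Fintype.card (κ → ℤˣ) := by positivity
  refine le_of_mul_le_mul_left ?_ hN
  calc Fintype.card (κ → ℤˣ) * (#U : ℝ) = ∑ _σ : κ → ℤˣ, (#U : ℝ) := by simp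
    _ ≤ ∑ σ : κ → ℤˣ, ∑ i, |A.mulVec (signVector U σ) i| ^ p := sum_le_sum fun σ _ => hA σ
    _ = ∑ i, ∑ σ : κ → ℤˣ, |∑ j ∈ U, A i j * (σ j : ℤ)| ^ p := by
        rw [sum_comm]; simp_rw [mulVec_signVector]
    _ ≤ ∑ i, Fintype.card (κ → ℤˣ) * (∑ j ∈ U, A i j ^ 2) ^ (p / 2) :=
        sum_le_sum fun i _ => sum_abs_sum_mul_units_rpow_le hp0 hp2 U _
    _ = _ := (mul_sum _ _ _).symm

theorem sum_rpow_le_of_sum_abs_mulVec_signVector_le (hp2 : 2 ≤ p) (C : ℝ)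
    (hA : ∀ σ : κ → ℤˣ, ∑ i, |A.mulVec (signVector U σ) i| ^ p ≤ C) :
    ∑ i, (∑ j ∈ U, A i j ^ 2) ^ (p / 2) ≤ C := by
  have hN : (0 : ℝ) < Fintype.card (κ → ℤˣ) := by positivity
  refine le_of_mul_le_mul_left ?_ hN
  calc Fintype.card (κ → ℤˣ) * ∑ i, (∑ j ∈ U, A i j ^ 2) ^ (p / 2)
      = ∑ i, Fintype.card (κ → ℤˣ) * (∑ j ∈ U, A i j ^ 2) ^ (p / 2) := mul_sum _ _ _
    _ ≤ ∑ i, ∑ σ : κ → ℤˣ, |∑ j ∈ U, A i j * (σ j : ℤ)| ^ p :=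
        sum_le_sum fun i _ => card_mul_rpow_le_sum_abs_sum_mul_units_rpow hp2 U _
    _ = ∑ σ : κ → ℤˣ, ∑ i, |A.mulVec (signVector U σ) i| ^ p := by
        rw [sum_comm]; simp_rw [mulVec_signVector]
    _ ≤ ∑ _σ : κ → ℤˣ, C := sum_le_sum fun σ _ => hA σ
    _ = _ := by simp

variable [Nonempty ι]

theorem card_mul_div_rpow_le_sum_sum_sq (hp0 : 0 < p) (hp2 : p ≤ 2)
    (hA : ∀ σ : κ → ℤˣ, (#U : ℝ) ≤ ∑ i, |A.mulVec (signVector U σ) i| ^ p) :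
    Fintype.card ι * ((#U : ℝ) / Fintype.card ι) ^ (2 / p) ≤ ∑ j ∈ U, ∑ i, A i j ^ 2 := by
  have hrows : ∀ i, 0 ≤ ∑ j ∈ U, A i j ^ 2 := fun i => sum_nonneg fun j _ => sq_nonneg _
  have hmean := sum_rpow_le_card_mul_rpow_avg hrows (by positivity : 0 < p / 2) (by linarith)
  rw [sum_comm, ← inv_div p 2, ← le_mul_div_rpow_iff (by positivity) (by positivity)
    (sum_nonneg fun i _ => hrows i) (by positivity)]
  exact (card_le_sum_rpow_of_le_sum_abs_mulVec_signVector A U hp0 hp2 hA).trans hmean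

theorem sum_sum_sq_le_mul_card_mul_div_rpow (hp2 : 2 ≤ p) {D : ℝ} (hD : 0 ≤ D)
    (hA : ∀ σ : κ → ℤˣ, ∑ i, |A.mulVec (signVector U σ) i| ^ p ≤ D ^ p * #U) :
    ∑ j ∈ U, ∑ i, A i j ^ 2 ≤ D ^ 2 * (Fintype.card ι * ((#U : ℝ) / Fintype.card ι) ^ (2 / p)) := by
  have hp0 : 0 < p := by linarith
  have hrows : ∀ i, 0 ≤ ∑ j ∈ U, A i j ^ 2 := fun i => sum_nonneg fun j _ => sq_nonneg _
  have hmean := card_mul_rpow_avg_le_sum_rpow hrows (by linarith : 1 ≤ p / 2)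
  have h := (mul_div_rpow_le_iff (by positivity) (by positivity) (sum_nonneg fun i _ => hrows i)
    (by positivity)).1 (hmean.trans (sum_rpow_le_of_sum_abs_mulVec_signVector_le A U hp2 _ hA))
  rw [sum_comm]
  convert h using 1
  rw [inv_div p 2, mul_div_assoc, Real.mul_rpow (by positivity) (by positivity), ← Real.rpow_mul hD,
    mul_div_cancel₀ _ hp0.ne', Real.rpow_two]
  ring

end SubsetBounds

section Averaging

variable {G : Type*} [AddCommGroup G] [Fintype G] {k : ℕ}

theorem card_mul_le_sum_of_forall_card_eq (hk : 0 < k) (hkG : k ≤ Fintype.card G) (g : G → ℝ)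
    (c : ℝ) (h : ∀ U : Finset G, #U = k → k * c ≤ ∑ j ∈ U, g j) :
    Fintype.card G * c ≤ ∑ j, g j := by
  obtain ⟨S, -, hS⟩ := exists_subset_card_eq (s := (univ : Finset G)) (by simpa using hkG)
  have htranslate : ∀ t : G, k * c ≤ ∑ j ∈ S, g (t + j) := fun t => by
    simpa using h (S.map (addLeftEmbedding t)) (by simp [hS])
  have hk0 : (0 : ℝ) < k := by exact_mod_cast hk
  refine le_of_mul_le_mul_left ?_ hk0
  calc k * (Fintype.card G * c) = ∑ _t : G, k * c := by
        rw [sum_const, card_univ, nsmul_eq_mul]; ring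
    _ ≤ ∑ t : G, ∑ j ∈ S, g (t + j) := sum_le_sum fun t _ => htranslate t
    _ = ∑ j ∈ S, ∑ t, g t := by
        rw [sum_comm]; exact sum_congr rfl fun j _ => Equiv.sum_comp (Equiv.addRight j) g
    _ = k * ∑ j, g j := by simp [hS]

theorem sum_le_card_mul_of_forall_card_eq (hk : 0 < k) (hkG : k ≤ Fintype.card G) (g : G → ℝ)
    (c : ℝ) (h : ∀ U : Finset G, #U = k → ∑ j ∈ U, g j ≤ k * c) :
    ∑ j, g j ≤ Fintype.card G * c := by
  have := card_mul_le_sum_of_forall_card_eq hk hkG (-g) (-c) fun U hU => by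
    simpa [sum_neg_distrib] using h U hU
  simpa [sum_neg_distrib] using this

end Averaging

/-- Sum-of-squares bounds for RIP matrices: if `A` is `(k,D)`-RIP-`p` then
`Σ_{i,j} A_{i,j}^2 ≥ n (k/m)^(2/p-1)` when `1 < p ≤ 2`, and
`Σ_{i,j} A_{i,j}^2 ≤ n D^2 (k/m)^(2/p-1)` when `p ≥ 2`. -/
theorem rip_sum_of_squares (m n k : ℕ) (hk : 1 ≤ k) (hkn : k ≤ n) (hm : 1 ≤ m)
    (p D : ℝ) (hp : 1 ≤ p) (hD : 1 < D)
    (A : Matrix (Fin m) (Fin n) ℝ)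
    (hRIP : ∀ x : Fin n → ℝ, Set.ncard {i | x i ≠ 0} ≤ k →
      (∑ i, |x i| ^ p) ^ (1 / p) ≤ (∑ i, |A.mulVec x i| ^ p) ^ (1 / p) ∧
      (∑ i, |A.mulVec x i| ^ p) ^ (1 / p) ≤ D * (∑ i, |x i| ^ p) ^ (1 / p)) :
    (1 < p → p ≤ 2 →
      (n : ℝ) * ((k : ℝ) / (m : ℝ)) ^ (2 / p - 1) ≤ ∑ i, ∑ j, (A i j) ^ 2) ∧
    (2 ≤ p →
      ∑ i, ∑ j, (A i j) ^ 2 ≤ (n : ℝ) * D ^ 2 * ((k : ℝ) / (m : ℝ)) ^ (2 / p - 1)) := by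
  have hp0 : 0 < p := by linarith
  have : Nonempty (Fin m) := ⟨⟨0, hm⟩⟩
  have : NeZero n := ⟨by omega⟩
  have hRIP' : ∀ U : Finset (Fin n), #U = k → ∀ σ : Fin n → ℤˣ,
      (#U : ℝ) ≤ ∑ i, |A.mulVec (signVector U σ) i| ^ p ∧
      ∑ i, |A.mulVec (signVector U σ) i| ^ p ≤ D ^ p * #U := fun U hU σ => by
    obtain ⟨hlow, hup⟩ := hRIP _ (hU ▸ ncard_support_signVector_le U σ)
    rw [sum_abs_signVector_rpow U σ hp0] at hlow hup
    have hAx : 0 ≤ ∑ i, |A.mulVec (signVector U σ) i| ^ p := by positivity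
    exact ⟨(Real.rpow_le_rpow_iff (by positivity) hAx (by positivity)).1 hlow,
      (rpow_one_div_le_mul_rpow_one_div_iff hAx (by positivity) (by linarith) hp0).1 hup⟩
  have hrescale : (k : ℝ) * (k / m) ^ (2 / p - 1) = m * (k / m) ^ (2 / p) := by
    have : (0 : ℝ) < k / m := by positivity
    rw [Real.rpow_sub_one this.ne']
    field_simp
  rw [sum_comm]
  refine ⟨fun _ hp2 => ?_, fun hp2 => ?_⟩
  · have hsubset : ∀ U : Finset (Fin n), #U = k →
        (k : ℝ) * (k / m) ^ (2 / p - 1) ≤ ∑ j ∈ U, ∑ i, A i j ^ 2 := fun U hU => by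
      rw [hrescale, ← hU]
      simpa using card_mul_div_rpow_le_sum_sum_sq A U hp0 hp2 fun σ => (hRIP' U hU σ).1
    simpa using card_mul_le_sum_of_forall_card_eq hk (by simpa using hkn) _ _ hsubset
  · have hsubset : ∀ U : Finset (Fin n), #U = k →
        ∑ j ∈ U, ∑ i, A i j ^ 2 ≤ k * (D ^ 2 * (k / m) ^ (2 / p - 1)) := fun U hU => by
      rw [mul_left_comm, hrescale, ← hU]
      simpa using sum_sum_sq_le_mul_card_mul_div_rpow A U hp2 (by linarith) fun σ =>
        (hRIP' U hU σ).2
    simpa [mul_assoc] using sum_le_card_mul_of_forall_card_eq hk (by simpa using hkn) _ _ hsubset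
end

section
/- For any m × n matrix A with the (k,D)-RIP-p property and p > 2, either m ≥ n/(2k) or m ≥ Ω(k^p / D^{p^2/(p-2)}). -/
/-!
Put `τ = D k^(1/p - 1)`. Testing the upper RIP bound on a sign vector supported on `k` entries of
a row shows that every row has fewer than `k` entries with `|A i j| > τ`; so if `n > 2km`, some `k`
columns have all their entries bounded by `τ`. For each of them the lower RIP bound gives
`1 ≤ ‖A_j‖_p^p ≤ τ^(p-2) ‖A_j‖_2^2`. On the other hand, choosing signs greedily,
`∑_j ‖A_j‖_2^2 ≤ ‖A ε‖_2^2 ≤ m^(1-2/p) ‖A ε‖_p^2 ≤ m^(1-2/p) (D^p k)^(2/p)`.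
Comparing the two bounds gives `k^p ≤ D^(p²/(p-2)) m`.
-/

open Finset

theorem sum_sq_le_card_rpow_mul_sum_abs_rpow {ι : Type*} [Fintype ι] {p : ℝ} (hp : 2 < p)
    (v : ι → ℝ) :
    ∑ i, v i ^ 2 ≤ (Fintype.card ι : ℝ) ^ (1 - 2 / p) * (∑ i, |v i| ^ p) ^ (2 / p) := by
  have hp2 : 0 < p - 2 := by linarith
  have hholder : p.HolderTriple (2 * p / (p - 2)) 2 :=
    ⟨by field_simp; ring, by linarith, by positivity⟩
  have h := Real.Lr_rpow_le_Lp_mul_Lq univ v (fun _ => 1) hholder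
  have hq : 2 / (2 * p / (p - 2)) = 1 - 2 / p := by field_simp
  simp only [mul_one, abs_one, Real.one_rpow, sum_const, card_univ, nsmul_eq_mul, hq,
    Real.rpow_two, sq_abs] at h
  linarith

theorem sum_abs_rpow_le_rpow_mul_sum_sq {ι : Type*} (s : Finset ι) {v : ι → ℝ} {τ p : ℝ}
    (hp : 2 ≤ p) (hv : ∀ i ∈ s, |v i| ≤ τ) :
    ∑ i ∈ s, |v i| ^ p ≤ τ ^ (p - 2) * ∑ i ∈ s, v i ^ 2 := by
  rw [mul_sum]
  refine sum_le_sum fun i hi => ?_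
  calc |v i| ^ p = |v i| ^ (p - 2) * v i ^ 2 := by
        rw [← sq_abs, ← Real.rpow_two, ← Real.rpow_add' (abs_nonneg _) (by linarith),
          sub_add_cancel]
    _ ≤ τ ^ (p - 2) * v i ^ 2 := by
        gcongr
        exact hv i hi

theorem Finset.card_filter_exists_le {ι κ : Type*} [Fintype ι] [Fintype κ] [DecidableEq κ]
    (P : ι → κ → Prop) [∀ i, DecidablePred (P i)] {k : ℕ}
    (h : ∀ i, #{j | P i j} ≤ k) :
    #{j | ∃ i, P i j} ≤ Fintype.card ι * k :=
  calc #{j | ∃ i, P i j} = #(univ.biUnion fun i => {j | P i j}) := by congr 1; ext; simp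
    _ ≤ Fintype.card ι * k := card_biUnion_le_card_mul _ _ _ fun i _ => h i

theorem exists_abs_eq_one_sum_norm_sq_le {ι E : Type*} [NormedAddCommGroup E]
    [InnerProductSpace ℝ E] (S : Finset ι) (u : ι → E) :
    ∃ ε : ι → ℝ, (∀ j, |ε j| = 1) ∧
      ∑ j ∈ S, ‖u j‖ ^ 2 ≤ ‖∑ j ∈ S, ε j • u j‖ ^ 2 := by
  classical
  induction S using Finset.induction_on with
  | empty => exact ⟨1, fun _ => by simp, by simp⟩
  | @insert a S ha ih =>
    obtain ⟨ε, hε, hle⟩ := ih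
    set v := ∑ j ∈ S, ε j • u j
    obtain ⟨s, hs, hinner⟩ : ∃ s : ℝ, |s| = 1 ∧ 0 ≤ s * inner ℝ (u a) v := by
      rcases le_total 0 (inner ℝ (u a) v) with h | h
      · exact ⟨1, by simp, by simpa using h⟩
      · exact ⟨-1, by simp, by simpa using h⟩
    refine ⟨Function.update ε a s, fun j => ?_, ?_⟩
    · rcases eq_or_ne j a with rfl | hj
      · simpa using hs
      · simpa [Function.update_of_ne hj] using hε j
    have hv : ∑ j ∈ S, Function.update ε a s j • u j = v :=
      sum_congr rfl fun j hj => by rw [Function.update_of_ne (ne_of_mem_of_not_mem hj ha)]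
    rw [sum_insert ha, sum_insert ha, Function.update_self, hv, norm_add_sq_real, norm_smul,
      inner_smul_left, mul_pow, Real.norm_eq_abs, hs]
    simp only [conj_trivial]
    linarith

theorem rpow_le_rpow_mul_of_le_rpow_mul {k D m p : ℝ} (hk : 0 < k) (hD : 0 < D) (hm : 0 < m)
    (hp : 2 < p)
    (h : k ≤ (D * k ^ (1 / p - 1)) ^ (p - 2) * (m ^ (1 - 2 / p) * (D ^ p * k) ^ (2 / p))) :
    k ^ p ≤ m * D ^ (p ^ 2 / (p - 2)) := by
  have hp2 : 0 < p - 2 := by linarith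
  rw [← Real.log_le_log_iff (by positivity) (by positivity)] at h ⊢
  simp (disch := positivity) only [Real.log_mul, Real.log_rpow] at h ⊢
  field_simp at h ⊢
  linarith

namespace Matrix

variable {m n : Type*} [Fintype m] [Fintype n]

def IsRIP (A : Matrix m n ℝ) (k : ℕ) (p D : ℝ) : Prop :=
  ∀ x : n → ℝ, Set.ncard {i | x i ≠ 0} ≤ k →
    (∑ i, |x i| ^ p) ^ (1 / p) ≤ (∑ i, |A.mulVec x i| ^ p) ^ (1 / p) ∧
    (∑ i, |A.mulVec x i| ^ p) ^ (1 / p) ≤ D * (∑ i, |x i| ^ p) ^ (1 / p)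

namespace IsRIP

variable {A : Matrix m n ℝ} {k : ℕ} {p D : ℝ}

theorem sum_abs_rpow_le (hA : A.IsRIP k p D) (hp : 0 < p) {x : n → ℝ}
    (hx : Set.ncard {i | x i ≠ 0} ≤ k) : ∑ j, |x j| ^ p ≤ ∑ i, |(A *ᵥ x) i| ^ p := by
  have h := (hA x hx).1
  rwa [Real.rpow_le_rpow_iff (by positivity) (by positivity) (by positivity)] at h

theorem sum_abs_mulVec_rpow_le (hA : A.IsRIP k p D) (hp : 0 < p) (hD : 0 ≤ D) {x : n → ℝ}
    (hx : Set.ncard {i | x i ≠ 0} ≤ k) :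
    ∑ i, |(A *ᵥ x) i| ^ p ≤ D ^ p * ∑ j, |x j| ^ p := by
  have h := (hA x hx).2
  rwa [← Real.rpow_rpow_inv hD hp.ne', one_div, ← Real.mul_rpow (by positivity) (by positivity),
    Real.rpow_le_rpow_iff (by positivity) (by positivity) (by positivity)] at h

variable [DecidableEq n]

theorem one_le_sum_abs_rpow_col (hA : A.IsRIP k p D) (hk : 1 ≤ k) (hp : 0 < p) (j : n) :
    1 ≤ ∑ i, |A i j| ^ p := by
  have hsupp : Set.ncard {i | (Pi.single j 1 : n → ℝ) i ≠ 0} ≤ k := by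
    refine le_trans (Set.ncard_le_ncard (t := {j}) (fun i hi => ?_)) (by simpa using hk)
    by_contra hij
    exact hi (Pi.single_eq_of_ne hij 1)
  have hsingle : ∑ i, |(Pi.single j 1 : n → ℝ) i| ^ p = 1 := by
    rw [sum_eq_single j (fun i _ hij => by simp [Pi.single_eq_of_ne hij, hp.ne']) (by simp)]
    simp
  simpa [hsingle, mulVec_single] using hA.sum_abs_rpow_le hp hsupp

theorem sum_abs_mulVec_ite_rpow_le (hA : A.IsRIP k p D) (hp : 0 < p) (hD : 0 ≤ D)
    {S : Finset n} (hS : #S ≤ k) {ε : n → ℝ} (hε : ∀ j, |ε j| ≤ 1) :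
    ∑ i, |(A *ᵥ fun j => if j ∈ S then ε j else 0) i| ^ p ≤ D ^ p * #S := by
  have hsupp : Set.ncard {j | (if j ∈ S then ε j else 0) ≠ 0} ≤ k := by
    refine le_trans (Set.ncard_le_ncard (t := S) (fun j hj => ?_)) (by simpa using hS)
    by_contra hjS
    exact hj (if_neg hjS)
  have hsum : ∑ j, |if j ∈ S then ε j else 0| ^ p ≤ #S := by
    calc ∑ j, |if j ∈ S then ε j else 0| ^ p ≤ ∑ j, if j ∈ S then (1 : ℝ) else 0 := by
          refine sum_le_sum fun j _ => ?_
          split_ifs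
          · exact Real.rpow_le_one (abs_nonneg _) (hε j) hp.le
          · simp [Real.zero_rpow hp.ne']
      _ = #S := by simp
  calc _ ≤ D ^ p * ∑ j, |if j ∈ S then ε j else 0| ^ p :=
        hA.sum_abs_mulVec_rpow_le hp hD hsupp
    _ ≤ D ^ p * #S := by gcongr

theorem rpow_sum_abs_row_le (hA : A.IsRIP k p D) (hp : 0 < p) (hD : 0 ≤ D) {S : Finset n}
    (hS : #S ≤ k) (i : m) : (∑ j ∈ S, |A i j|) ^ p ≤ D ^ p * #S := by
  set x : n → ℝ := fun j => if j ∈ S then (SignType.sign (A i j) : ℝ) else 0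
  have hrow : (A *ᵥ x) i = ∑ j ∈ S, |A i j| := by
    simp [x, mulVec, dotProduct, mul_ite, sum_ite_mem]
  calc (∑ j ∈ S, |A i j|) ^ p = |(A *ᵥ x) i| ^ p := by
        rw [hrow, abs_of_nonneg (sum_nonneg fun _ _ => abs_nonneg _)]
    _ ≤ ∑ i', |(A *ᵥ x) i'| ^ p :=
        single_le_sum (f := fun i' => |(A *ᵥ x) i'| ^ p) (fun _ _ => by positivity) (mem_univ i)
    _ ≤ D ^ p * #S :=
        hA.sum_abs_mulVec_ite_rpow_le hp hD hS fun j => by cases SignType.sign (A i j) <;> simp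

theorem card_filter_lt_abs_lt (hA : A.IsRIP k p D) (hk : 1 ≤ k) (hp : 0 < p) (hD : 0 ≤ D)
    (i : m) : #{j | D * (k : ℝ) ^ (1 / p - 1) < |A i j|} < k := by
  by_contra! hcard
  obtain ⟨S, hSsub, hSk⟩ := exists_subset_card_eq hcard
  have hk0 : (0 : ℝ) < k := by exact_mod_cast hk
  have hlt : k * (D * (k : ℝ) ^ (1 / p - 1)) < ∑ j ∈ S, |A i j| := by
    simpa [hSk] using sum_lt_sum_of_nonempty (card_pos.mp (by omega))
      fun j hj => (mem_filter.mp (hSsub hj)).2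
  have hpow : (k * (D * (k : ℝ) ^ (1 / p - 1))) ^ p = D ^ p * k := by
    have hkτ : (k : ℝ) * (D * (k : ℝ) ^ (1 / p - 1)) = D * (k : ℝ) ^ (1 / p) := by
      rw [Real.rpow_sub_one hk0.ne']
      field_simp
    rw [hkτ, Real.mul_rpow hD (by positivity),
      ← Real.rpow_mul hk0.le, one_div_mul_cancel hp.ne', Real.rpow_one]
  have hrow := hA.rpow_sum_abs_row_le hp hD hSk.le i
  rw [hSk] at hrow
  linarith [Real.rpow_lt_rpow (by positivity) hlt hp]

theorem exists_card_eq_forall_abs_le (hA : A.IsRIP k p D) (hk : 1 ≤ k) (hp : 0 < p)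
    (hD : 0 ≤ D) (hn : Fintype.card m * k + k ≤ Fintype.card n) :
    ∃ S : Finset n, #S = k ∧ ∀ j ∈ S, ∀ i, |A i j| ≤ D * (k : ℝ) ^ (1 / p - 1) := by
  set τ := D * (k : ℝ) ^ (1 / p - 1)
  have hbad := card_filter_exists_le (fun i j => τ < |A i j|)
    fun i => (hA.card_filter_lt_abs_lt hk hp hD i).le
  have hsplit := card_filter_add_card_filter_not (s := univ) (fun j => ∀ i, |A i j| ≤ τ)
  simp only [not_forall, not_le, card_univ] at hsplit
  obtain ⟨S, hS, hSk⟩ :=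
    exists_subset_card_eq (show k ≤ #{j | ∀ i, |A i j| ≤ τ} by omega)
  exact ⟨S, hSk, fun j hj => (mem_filter.mp (hS hj)).2⟩

theorem sum_sum_sq_col_le (hA : A.IsRIP k p D) (hp : 2 < p) (hD : 0 ≤ D) {S : Finset n}
    (hS : #S ≤ k) :
    ∑ j ∈ S, ∑ i, A i j ^ 2 ≤
      (Fintype.card m : ℝ) ^ (1 - 2 / p) * (D ^ p * #S) ^ (2 / p) := by
  let col : n → EuclideanSpace ℝ m := fun j => WithLp.toLp 2 fun i => A i j
  obtain ⟨ε, hε, hle⟩ := exists_abs_eq_one_sum_norm_sq_le S col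
  set x : n → ℝ := fun j => if j ∈ S then ε j else 0
  have hsigned : ‖∑ j ∈ S, ε j • col j‖ ^ 2 = ∑ i, (A *ᵥ x) i ^ 2 := by
    simp [col, x, EuclideanSpace.real_norm_sq_eq, mulVec, dotProduct, mul_ite,
      sum_ite_mem, mul_comm]
  calc ∑ j ∈ S, ∑ i, A i j ^ 2 = ∑ j ∈ S, ‖col j‖ ^ 2 := by
        simp [col, EuclideanSpace.real_norm_sq_eq]
    _ ≤ ∑ i, (A *ᵥ x) i ^ 2 := hsigned ▸ hle
    _ ≤ (Fintype.card m : ℝ) ^ (1 - 2 / p) * (∑ i, |(A *ᵥ x) i| ^ p) ^ (2 / p) :=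
        sum_sq_le_card_rpow_mul_sum_abs_rpow hp _
    _ ≤ (Fintype.card m : ℝ) ^ (1 - 2 / p) * (D ^ p * #S) ^ (2 / p) := by
        gcongr
        exact hA.sum_abs_mulVec_ite_rpow_le (by linarith) hD hS fun j => (hε j).le

theorem card_le_rpow_mul (hA : A.IsRIP k p D) (hk : 1 ≤ k) (hp : 2 < p) (hD : 0 ≤ D)
    {τ : ℝ} (hτ0 : 0 ≤ τ) {S : Finset n} (hS : #S ≤ k)
    (hτ : ∀ j ∈ S, ∀ i, |A i j| ≤ τ) :
    (#S : ℝ) ≤ τ ^ (p - 2) * ((Fintype.card m : ℝ) ^ (1 - 2 / p) * (D ^ p * #S) ^ (2 / p)) :=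
  calc (#S : ℝ) = ∑ j ∈ S, 1 := by simp
    _ ≤ ∑ j ∈ S, ∑ i, |A i j| ^ p :=
        sum_le_sum fun j _ => hA.one_le_sum_abs_rpow_col hk (by linarith) j
    _ ≤ ∑ j ∈ S, τ ^ (p - 2) * ∑ i, A i j ^ 2 :=
        sum_le_sum fun j hj => sum_abs_rpow_le_rpow_mul_sum_sq univ hp.le fun i _ => hτ j hj i
    _ ≤ _ := by
        rw [← mul_sum]
        gcongr
        exact hA.sum_sum_sq_col_le hp hD hS

end IsRIP

end Matrix

/-- Dimension lower bound for `p > 2`: there is an absolute constant `c > 0` such that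
any `(k,D)`-RIP-`p` matrix satisfies either `m ≥ n/(2k)` or `m ≥ c k^p / D^(p²/(p-2))`. -/
theorem rip_dimension_lower_bound_p_gt_two :
    ∃ c : ℝ, 0 < c ∧
      ∀ (m n k : ℕ) (p D : ℝ) (A : Matrix (Fin m) (Fin n) ℝ),
        1 ≤ k → k ≤ n → 1 ≤ m → 2 < p → 1 < D →
        (∀ x : Fin n → ℝ, Set.ncard {i | x i ≠ 0} ≤ k →
          (∑ i, |x i| ^ p) ^ (1 / p) ≤ (∑ i, |A.mulVec x i| ^ p) ^ (1 / p) ∧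
          (∑ i, |A.mulVec x i| ^ p) ^ (1 / p) ≤ D * (∑ i, |x i| ^ p) ^ (1 / p)) →
        (m : ℝ) ≥ (n : ℝ) / (2 * k) ∨
        (m : ℝ) ≥ c * (k : ℝ) ^ p / D ^ (p ^ 2 / (p - 2)) := by
  refine ⟨1, one_pos, fun m n k p D A hk _ hm hp hD (hA : A.IsRIP k p D) => ?_⟩
  rw [or_iff_not_imp_left, ge_iff_le, not_le, ge_iff_le, one_mul,
    div_le_iff₀ (by positivity)]
  intro hsmall
  have hk0 : (0 : ℝ) < k := by exact_mod_cast hk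
  have hmk : m * (2 * k) < n := by
    rw [lt_div_iff₀ (by positivity)] at hsmall
    exact_mod_cast hsmall
  obtain ⟨S, hSk, hS⟩ := hA.exists_card_eq_forall_abs_le hk (by linarith) (by linarith)
    (by simp only [Fintype.card_fin]; linarith [Nat.le_mul_of_pos_left k hm])
  have hkey := hA.card_le_rpow_mul hk hp (by linarith) (by positivity) hSk.le hS
  rw [hSk, Fintype.card_fin] at hkey
  exact rpow_le_rpow_mul_of_le_rpow_mul hk0 (by linarith) (by exact_mod_cast hm) hp hkey
end

section
/- There is a constant C ≥ 1 such that if X ~ Bin(k−1, δ/k) with 0 < δ < 1/(2e^2), p ≥ 2, and ℓ ≥ 1 is real, then E[((X+1)^{p-1} − 1)^ℓ] ≤ C · δ · (ℓ(p−1)+1)^{ℓ(p−1)+1}. -/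
/-!
With `M = ℓ(p-1)`, the `i`-th term is at most `(i+1)^M δ^i`: the binomial weight is at most `δ^i`
because `(k-1).choose i ≤ (k-1)^i`, and `((i+1)^(p-1) - 1)^ℓ ≤ (i+1)^M`. The elementary bound
`x^M ≤ M^M e^(x-M)` (maximise `x^M e^(-x)`) turns this into `M^M (eδ)^i`, a geometric series of
ratio `eδ ≤ 1/2`. The term `i = 0` vanishes, so the series starts at `eδ`; hence `C = 2e` works.
-/

open Real Finset

theorem Real.rpow_le_rpow_self_mul_exp_sub {x M : ℝ} (hx : 0 ≤ x) (hM : 0 < M) :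
    x ^ M ≤ M ^ M * exp (x - M) := by
  rcases hx.eq_or_lt with rfl | hx
  · rw [zero_rpow hM.ne']
    positivity
  have hlog : log x - log M ≤ x / M - 1 := by
    rw [← log_div hx.ne' hM.ne']
    exact log_le_sub_one_of_pos (by positivity)
  have hscaled : M * (x / M - 1) = x - M := by field_simp
  calc x ^ M = exp (M * log x) := by rw [rpow_def_of_pos hx, mul_comm]
    _ ≤ exp (M * log M + (x - M)) := by
      gcongr
      nlinarith [mul_le_mul_of_nonneg_left hlog hM.le]
    _ = M ^ M * exp (x - M) := by rw [exp_add, rpow_def_of_pos hM, mul_comm M]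

theorem Real.nat_add_one_rpow_le {M : ℝ} (hM : 1 ≤ M) (i : ℕ) :
    ((i : ℝ) + 1) ^ M ≤ M ^ M * exp 1 ^ i := by
  calc ((i : ℝ) + 1) ^ M ≤ M ^ M * exp ((i + 1) - M) :=
        rpow_le_rpow_self_mul_exp_sub (by positivity) (by linarith)
    _ ≤ M ^ M * exp i := by gcongr; linarith
    _ = M ^ M * exp 1 ^ i := by rw [exp_one_pow]

theorem Real.rpow_sub_one_rpow_le {x a ℓ : ℝ} (hx : 1 ≤ x) (ha : 0 ≤ a) (hℓ : 0 ≤ ℓ) :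
    (x ^ a - 1) ^ ℓ ≤ x ^ (ℓ * a) := by
  calc (x ^ a - 1) ^ ℓ ≤ (x ^ a) ^ ℓ :=
        rpow_le_rpow (sub_nonneg.2 (one_le_rpow hx ha)) (by linarith) hℓ
    _ = x ^ (ℓ * a) := by rw [← rpow_mul (by linarith), mul_comm]

theorem Nat.choose_mul_pow_mul_pow_le (n i : ℕ) {q : ℝ} (hq0 : 0 ≤ q) (hq1 : q ≤ 1) :
    (n.choose i : ℝ) * q ^ i * (1 - q) ^ (n - i) ≤ (n * q) ^ i := by
  calc (n.choose i : ℝ) * q ^ i * (1 - q) ^ (n - i) ≤ (n.choose i : ℝ) * q ^ i * 1 := by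
        gcongr
        exact pow_le_one₀ (sub_nonneg.2 hq1) (by linarith)
    _ ≤ (n : ℝ) ^ i * q ^ i := by
        rw [mul_one]
        gcongr
        exact_mod_cast Nat.choose_le_pow n i
    _ = (n * q) ^ i := (mul_pow _ _ _).symm

theorem binomial_weight_le_pow (k i : ℕ) {δ : ℝ} (hδ0 : 0 ≤ δ) (hδ1 : δ ≤ 1) :
    ((k - 1).choose i : ℝ) * (δ / k) ^ i * (1 - δ / k) ^ (k - 1 - i) ≤ δ ^ i := by
  rcases k.eq_zero_or_pos with rfl | hk
  · cases i <;> simp [pow_nonneg hδ0]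
  have hk' : (1 : ℝ) ≤ k := by exact_mod_cast hk
  have hq : δ / k ≤ 1 := (div_le_one (by positivity)).2 (by linarith)
  have hmean : ((k - 1 : ℕ) : ℝ) * (δ / k) ≤ δ := by
    rw [Nat.cast_sub hk, mul_div_assoc', div_le_iff₀ (by positivity)]
    push_cast
    nlinarith
  exact (Nat.choose_mul_pow_mul_pow_le _ i (by positivity) hq).trans
    (pow_le_pow_left₀ (by positivity) hmean i)

theorem binomial_moment_term_le (k i : ℕ) {δ p ℓ : ℝ} (hδ0 : 0 ≤ δ) (hδ1 : δ ≤ 1) (hp : 1 ≤ p)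
    (hM : 1 ≤ ℓ * (p - 1)) :
    (((i : ℝ) + 1) ^ (p - 1) - 1) ^ ℓ *
        (((k - 1).choose i : ℝ) * (δ / k) ^ i * (1 - δ / k) ^ (k - 1 - i)) ≤
      (ℓ * (p - 1)) ^ (ℓ * (p - 1)) * (exp 1 * δ) ^ i := by
  have hℓ : 0 ≤ ℓ := by nlinarith
  have hbase : 1 ≤ ((i : ℝ) + 1) ^ (p - 1) := one_le_rpow (by linarith) (by linarith)
  calc _ ≤ ((i : ℝ) + 1) ^ (ℓ * (p - 1)) * δ ^ i :=
        mul_le_mul_of_nonneg (rpow_sub_one_rpow_le (by linarith) (by linarith) hℓ)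
          (binomial_weight_le_pow k i hδ0 hδ1) (rpow_nonneg (by linarith) ℓ) (by positivity)
    _ ≤ (ℓ * (p - 1)) ^ (ℓ * (p - 1)) * exp 1 ^ i * δ ^ i := by
        gcongr
        exact nat_add_one_rpow_le hM i
    _ = (ℓ * (p - 1)) ^ (ℓ * (p - 1)) * (exp 1 * δ) ^ i := by ring

theorem geom_sum_le_two {r : ℝ} (hr0 : 0 ≤ r) (hr : r ≤ 1 / 2) (n : ℕ) :
    ∑ i ∈ range n, r ^ i ≤ 2 := by
  calc ∑ i ∈ range n, r ^ i ≤ r ^ 0 / (1 - r) := by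
        rw [range_eq_Ico]
        exact geom_sum_Ico_le_of_lt_one hr0 (by linarith)
    _ ≤ 2 := by
        rw [pow_zero, div_le_iff₀ (by linarith)]
        linarith

/-- Moment bound for `(X+1)^(p-1) - 1` where `X ~ Bin(k-1, δ/k)`: there is `C ≥ 1`
such that for `0 < δ < 1/(2e²)`, `p ≥ 2` and real `ℓ ≥ 1`,
`E[((X+1)^(p-1) - 1)^ℓ] ≤ C δ (ℓ(p-1)+1)^(ℓ(p-1)+1)`. -/
theorem binomial_power_moment_bound :
    ∃ C : ℝ, 1 ≤ C ∧
      ∀ (k : ℕ) (δ p ℓ : ℝ), 1 ≤ k → 0 < δ → δ < 1 / (2 * Real.exp 1 ^ 2) →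
        2 ≤ p → 1 ≤ ℓ →
        ∑ i ∈ Finset.range k,
            ((((i : ℝ) + 1) ^ (p - 1) - 1) ^ ℓ *
              (((k - 1).choose i : ℝ) * (δ / k) ^ i * (1 - δ / k) ^ (k - 1 - i))) ≤
          C * δ * (ℓ * (p - 1) + 1) ^ (ℓ * (p - 1) + 1) := by
  have he : 1 ≤ exp 1 := one_le_exp zero_le_one
  refine ⟨2 * exp 1, by linarith, fun k δ p ℓ hk hδ0 hδ hp hℓ => ?_⟩
  have hM : 1 ≤ ℓ * (p - 1) := by nlinarith
  have heδ : exp 1 * δ ≤ 1 / 2 := by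
    rw [lt_div_iff₀ (by positivity)] at hδ
    nlinarith
  have hMpow : (ℓ * (p - 1)) ^ (ℓ * (p - 1)) ≤ (ℓ * (p - 1) + 1) ^ (ℓ * (p - 1) + 1) :=
    calc _ ≤ (ℓ * (p - 1) + 1) ^ (ℓ * (p - 1)) := by gcongr; linarith
      _ ≤ _ := rpow_le_rpow_of_exponent_le (by linarith) (by linarith)
  obtain ⟨n, rfl⟩ : ∃ n, k = n + 1 := ⟨k - 1, by omega⟩
  rw [sum_range_succ', Nat.cast_zero, zero_add, one_rpow, sub_self, zero_rpow (by linarith),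
    zero_mul, add_zero]
  calc _ ≤ ∑ j ∈ range n, (ℓ * (p - 1)) ^ (ℓ * (p - 1)) * (exp 1 * δ) ^ (j + 1) :=
        sum_le_sum fun j _ => binomial_moment_term_le _ _ hδ0.le (by nlinarith) (by linarith) hM
    _ = (ℓ * (p - 1)) ^ (ℓ * (p - 1)) * (exp 1 * δ) * ∑ j ∈ range n, (exp 1 * δ) ^ j := by
        rw [mul_sum]
        exact sum_congr rfl fun j _ => by ring
    _ ≤ (ℓ * (p - 1) + 1) ^ (ℓ * (p - 1) + 1) * (exp 1 * δ) * 2 := by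
        gcongr
        exact geom_sum_le_two (by positivity) heδ n
    _ = 2 * exp 1 * δ * (ℓ * (p - 1) + 1) ^ (ℓ * (p - 1) + 1) := by ring
end

section
/- Let Y_1,…,Y_d be independent nonnegative random variables with common distribution D and t ≥ 1. Then E[(Y_1+…+Y_d)^t]^{1/t} ≤ e · inf{ u > 0 : E_{Y~D}[(1 + Y/u)^t] ≤ e^{t/d} }. -/
/-!
For every admissible `u`, the elementary inequality `1 + ∑ xᵢ ≤ ∏ (1 + xᵢ)` for `xᵢ ≥ 0`
gives `(∑ Yᵢ)^t ≤ u^t ∏ (1 + Yᵢ/u)^t` pointwise. Independence turns the expectation of the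
product into a product of expectations, each at most `e^{t/d}`, so `E[(∑ Yᵢ)^t] ≤ (e u)^t`.
The set of admissible `u` is nonempty because `E[(1 + Y/u)^t] → 1 < e^{t/d}` as `u → ∞`,
by dominated convergence.
-/

open MeasureTheory ProbabilityTheory Filter Topology

theorem Finset.one_add_sum_le_prod_one_add {ι R : Type*} [CommSemiring R] [PartialOrder R]
    [IsOrderedRing R] (s : Finset ι) {x : ι → R} (hx : ∀ i ∈ s, 0 ≤ x i) :
    1 + ∑ i ∈ s, x i ≤ ∏ i ∈ s, (1 + x i) := by
  induction s using Finset.cons_induction with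
  | empty => simp
  | cons i s hi ih =>
    have hxi : 0 ≤ x i := hx i (mem_cons_self i s)
    have hs := ih fun j hj => hx j (mem_cons_of_mem hj)
    rw [sum_cons, prod_cons]
    calc 1 + (x i + ∑ j ∈ s, x j)
        ≤ 1 + (x i + ∑ j ∈ s, x j) + x i * ∑ j ∈ s, x j :=
          le_add_of_nonneg_right (mul_nonneg hxi (sum_nonneg fun j hj => hx j (mem_cons_of_mem hj)))
      _ = (1 + x i) * (1 + ∑ j ∈ s, x j) := by ring
      _ ≤ (1 + x i) * ∏ j ∈ s, (1 + x j) :=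
          mul_le_mul_of_nonneg_left hs (add_nonneg zero_le_one hxi)

theorem Real.rpow_sum_le_mul_prod_one_add_div_rpow {ι : Type*} (s : Finset ι) {x : ι → ℝ}
    (hx : ∀ i ∈ s, 0 ≤ x i) {u t : ℝ} (hu : 0 < u) (ht : 0 ≤ t) :
    (∑ i ∈ s, x i) ^ t ≤ u ^ t * ∏ i ∈ s, (1 + x i / u) ^ t := by
  have hxu : ∀ i ∈ s, 0 ≤ x i / u := fun i hi => div_nonneg (hx i hi) hu.le
  have hsum : ∑ i ∈ s, x i ≤ u * ∏ i ∈ s, (1 + x i / u) :=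
    calc ∑ i ∈ s, x i = u * ∑ i ∈ s, x i / u := by
          rw [Finset.mul_sum]
          exact Finset.sum_congr rfl fun i _ => (mul_div_cancel₀ _ hu.ne').symm
      _ ≤ u * (1 + ∑ i ∈ s, x i / u) := by linarith
      _ ≤ u * ∏ i ∈ s, (1 + x i / u) :=
          mul_le_mul_of_nonneg_left (s.one_add_sum_le_prod_one_add hxu) hu.le
  have hfac : ∀ i ∈ s, 0 ≤ 1 + x i / u := fun i hi => by linarith [hxu i hi]
  calc (∑ i ∈ s, x i) ^ t ≤ (u * ∏ i ∈ s, (1 + x i / u)) ^ t :=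
        rpow_le_rpow (Finset.sum_nonneg hx) hsum ht
    _ = u ^ t * ∏ i ∈ s, (1 + x i / u) ^ t := by
        rw [mul_rpow hu.le (Finset.prod_nonneg hfac), finsetProd_rpow s _ hfac]

section Probability

variable {Ω : Type*} [MeasurableSpace Ω] {μ : Measure Ω}

theorem ProbabilityTheory.iIndepFun.integrable_finsetProd {ι : Type*} {X : ι → Ω → ℝ}
    (hX : iIndepFun X μ) (hmeas : ∀ i, Measurable (X i)) (hint : ∀ i, Integrable (X i) μ)
    (s : Finset ι) : Integrable (∏ i ∈ s, X i) μ := by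
  have := hX.isProbabilityMeasure
  induction s using Finset.cons_induction with
  | empty => exact integrable_const 1
  | cons i s hi ih =>
    rw [Finset.prod_cons, mul_comm]
    exact (hX.indepFun_finsetProd_of_notMem hmeas hi).integrable_mul ih (hint i)

theorem integral_rpow_sum_le_of_integral_one_add_div_rpow_le {ι : Type*} [Fintype ι]
    {Y : ι → Ω → ℝ} (hpos : ∀ i ω, 0 ≤ Y i ω) (hmeas : ∀ i, Measurable (Y i))
    (hindep : iIndepFun Y μ) {t u c : ℝ} (ht : 0 ≤ t) (hu : 0 < u)
    (hint : ∀ i, Integrable (fun ω => (1 + Y i ω / u) ^ t) μ)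
    (hle : ∀ i, ∫ ω, (1 + Y i ω / u) ^ t ∂μ ≤ c) :
    ∫ ω, (∑ i, Y i ω) ^ t ∂μ ≤ u ^ t * c ^ Fintype.card ι := by
  have hφ : Measurable fun x : ℝ => (1 + x / u) ^ t := by fun_prop
  have hprod : Integrable (fun ω => ∏ i, (1 + Y i ω / u) ^ t) μ := by
    convert (hindep.comp _ fun _ => hφ).integrable_finsetProd (fun i => hφ.comp (hmeas i)) hint
      Finset.univ using 1
    ext ω
    rw [Finset.prod_apply]
    rfl
  calc ∫ ω, (∑ i, Y i ω) ^ t ∂μ ≤ ∫ ω, u ^ t * ∏ i, (1 + Y i ω / u) ^ t ∂μ :=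
        integral_mono_of_nonneg
          (ae_of_all _ fun ω => Real.rpow_nonneg (Finset.sum_nonneg fun i _ => hpos i ω) t)
          (hprod.const_mul _)
          (ae_of_all _ fun ω => Real.rpow_sum_le_mul_prod_one_add_div_rpow _
            (fun i _ => hpos i ω) hu ht)
    _ = u ^ t * ∏ i, ∫ ω, (1 + Y i ω / u) ^ t ∂μ := by
        rw [integral_const_mul, hindep.integral_fun_prod_comp (fun i => (hmeas i).aemeasurable)
          fun _ => hφ.aestronglyMeasurable]
    _ ≤ u ^ t * ∏ _i : ι, c := by
        refine mul_le_mul_of_nonneg_left (Finset.prod_le_prod (fun i _ => ?_) fun i _ => hle i)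
          (Real.rpow_nonneg hu.le t)
        exact integral_nonneg fun ω =>
          Real.rpow_nonneg (add_nonneg zero_le_one (div_nonneg (hpos i ω) hu.le)) t
    _ = u ^ t * c ^ Fintype.card ι := by rw [Finset.prod_const, Finset.card_univ]

theorem tendsto_integral_one_add_div_rpow_atTop [IsProbabilityMeasure μ] {X : Ω → ℝ}
    (hX : ∀ ω, 0 ≤ X ω) (hmeas : Measurable X) {t : ℝ} (ht : 0 ≤ t)
    (hint : Integrable (fun ω => (1 + X ω) ^ t) μ) :
    Tendsto (fun u => ∫ ω, (1 + X ω / u) ^ t ∂μ) atTop (𝓝 1) := by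
  have hbound : ∀ᶠ u : ℝ in atTop, ∀ᵐ ω ∂μ, ‖(1 + X ω / u) ^ t‖ ≤ (1 + X ω) ^ t := by
    filter_upwards [eventually_ge_atTop 1] with u hu
    refine ae_of_all _ fun ω => ?_
    have hbase : 0 ≤ 1 + X ω / u := add_nonneg zero_le_one (div_nonneg (hX ω) (by linarith))
    rw [Real.norm_of_nonneg (Real.rpow_nonneg hbase t)]
    exact Real.rpow_le_rpow hbase (by linarith [div_le_self (hX ω) hu]) ht
  have hlim : ∀ᵐ ω ∂μ, Tendsto (fun u => (1 + X ω / u) ^ t) atTop (𝓝 1) := by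
    refine ae_of_all _ fun ω => ?_
    have hbase : Tendsto (fun u => 1 + X ω / u) atTop (𝓝 (1 + 0)) :=
      tendsto_const_nhds.add (tendsto_const_nhds.div_atTop tendsto_id)
    simpa using hbase.rpow_const (Or.inr ht)
  simpa using tendsto_integral_filter_of_dominated_convergence _
    (Eventually.of_forall fun u => by fun_prop) hbound hint hlim

end Probability

theorem latala_moment_bound_general
    {Ω : Type*} [MeasurableSpace Ω] (μ : Measure Ω) [IsProbabilityMeasure μ]
    (d : ℕ) (hd : 1 ≤ d) (Y : Fin d → Ω → ℝ)
    (hpos : ∀ i ω, 0 ≤ Y i ω)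
    (hmeas : ∀ i, Measurable (Y i))
    (hid : ∀ i : Fin d, Measure.map (Y i) μ = Measure.map (Y ⟨0, hd⟩) μ)
    (hindep : iIndepFun Y μ)
    (t : ℝ) (ht : 1 ≤ t)
    (hint : ∀ u : ℝ, 0 < u → Integrable (fun ω => (1 + Y ⟨0, hd⟩ ω / u) ^ t) μ) :
    (∫ ω, (∑ i, Y i ω) ^ t ∂μ) ^ (1 / t) ≤
      Real.exp 1 *
        sInf {u : ℝ | 0 < u ∧ ∫ ω, (1 + Y ⟨0, hd⟩ ω / u) ^ t ∂μ ≤ Real.exp (t / d)} := by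
  set S := {u : ℝ | 0 < u ∧ ∫ ω, (1 + Y ⟨0, hd⟩ ω / u) ^ t ∂μ ≤ Real.exp (t / d)}
  have ht0 : 0 < t := by linarith
  have hd0 : (0 : ℝ) < d := by exact_mod_cast hd
  have hident : ∀ i, IdentDistrib (Y i) (Y ⟨0, hd⟩) μ μ :=
    fun i => ⟨(hmeas i).aemeasurable, (hmeas _).aemeasurable, hid i⟩
  have hmoment : ∀ u ∈ S, ∫ ω, (∑ i, Y i ω) ^ t ∂μ ≤ (Real.exp 1 * u) ^ t := by
    rintro u ⟨hu, hle⟩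
    have hφ : Measurable fun x : ℝ => (1 + x / u) ^ t := by fun_prop
    calc ∫ ω, (∑ i, Y i ω) ^ t ∂μ ≤ u ^ t * Real.exp (t / d) ^ Fintype.card (Fin d) :=
          integral_rpow_sum_le_of_integral_one_add_div_rpow_le hpos hmeas hindep ht0.le hu
            (fun i => ((hident i).comp hφ).integrable_iff.mpr (hint u hu))
            (fun i => ((hident i).comp hφ).integral_eq ▸ hle)
      _ = (Real.exp 1 * u) ^ t := by
          rw [Fintype.card_fin, ← Real.exp_nat_mul, mul_div_cancel₀ _ hd0.ne',
            Real.mul_rpow (Real.exp_pos 1).le hu.le, Real.exp_one_rpow, mul_comm]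
  have hne : S.Nonempty := by
    have hlim := tendsto_integral_one_add_div_rpow_atTop (hpos _) (hmeas _) ht0.le
      (by simpa using hint 1 one_pos)
    obtain ⟨u, hlt, hu⟩ := ((hlim.eventually (gt_mem_nhds (Real.one_lt_exp_iff.mpr
      (div_pos ht0 hd0)))).and (eventually_gt_atTop 0)).exists
    exact ⟨u, hu, hlt.le⟩
  rw [← div_le_iff₀' (Real.exp_pos 1)]
  refine le_csInf hne fun u hu => ?_
  rw [div_le_iff₀' (Real.exp_pos 1), one_div, Real.rpow_inv_le_iff_of_pos
    (integral_nonneg fun ω => Real.rpow_nonneg (Finset.sum_nonneg fun i _ => hpos i ω) t)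
    (mul_nonneg (Real.exp_pos 1).le hu.1.le) ht0]
  exact hmoment u hu

/-- Latała's moment estimate: for i.i.d. nonnegative random variables `Y_1,…,Y_d` and `t ≥ 1`,
`E[(Y_1+…+Y_d)^t]^(1/t) ≤ e · inf { u > 0 : E[(1+Y/u)^t] ≤ e^(t/d) }`. -/
theorem latala_moment_bound
    {Ω : Type*} [MeasurableSpace Ω] (μ : Measure Ω) [IsProbabilityMeasure μ]
    (d : ℕ) (hd : 1 ≤ d) (Y : Fin d → Ω → ℝ)
    (hpos : ∀ i ω, 0 ≤ Y i ω)
    (hmeas : ∀ i, Measurable (Y i))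
    (hid : ∀ i : Fin d, Measure.map (Y i) μ = Measure.map (Y ⟨0, hd⟩) μ)
    (hindep : iIndepFun Y μ)
    (t : ℝ) (ht : 1 ≤ t)
    (hint : ∀ u : ℝ, 0 < u → Integrable (fun ω => (1 + Y ⟨0, hd⟩ ω / u) ^ t) μ)
    (hintS : Integrable (fun ω => (∑ i, Y i ω) ^ t) μ) :
    (∫ ω, (∑ i, Y i ω) ^ t ∂μ) ^ (1 / t) ≤
      Real.exp 1 *
        sInf {u : ℝ | 0 < u ∧ ∫ ω, (1 + Y ⟨0, hd⟩ ω / u) ^ t ∂μ ≤ Real.exp (t / d)} :=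
  latala_moment_bound_general μ d hd Y hpos hmeas hid hindep t ht hint
end

section
/- Let G = (U, V, E) be a bipartite (2ℓ, d, δ)-expander, let S_j ⊆ [m] denote the neighborhood of column j, fix a block B_b = {(b−1)ℓ+1,…,bℓ} of ℓ columns, and let D_b ∪ D'_b be the set of nonzero entries (i,j) with j ≥ (b−1)ℓ+1 that are 'secondary or tertiary' with respect to B_b. Then for every integer t ≥ 1: if t = 1 the set {(i,j) ∈ D_b ∪ D'_b : j ≤ (b−1)ℓ+t} is empty, and if t > 1 its cardinality is at most 3δdt. Moreover |D_b| ≤ δdℓ. -/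
/-!
The secondary entries of a block are its non-leading entries (those not leftmost in their row
among the block's columns). For any column set `T` the non-leading entries number
`d|T| - |N(T)|`, since every row of `N(T)` has exactly one leading entry, so expansion bounds
them by `δd|T|` whenever `|T| ≤ 2ℓ`. A tertiary entry in block `B_{b'}` sits below an entry of
`B_b`, hence is non-leading in `B_b ∪ B_{b'}`; a prefix of length `s` past the start of `B_b`
meets at most `s/ℓ` later blocks, each contributing at most `2δdℓ`.
-/

/-- Column `j` (numbered from `0`) lies in block `B_b = {(b-1)ℓ, …, bℓ - 1}`. -/
def InBlock (ℓ b j : ℕ) : Prop := (b - 1) * ℓ ≤ j ∧ j < b * ℓ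

/-- Secondary entries of block `b`: nonzero entries `(i,j)` with `j ∈ B_b` that are not the
leftmost nonzero entry of row `i` within `B_b`. -/
def SecondaryEntries {n m : ℕ} (S : Fin n → Finset (Fin m)) (ℓ b : ℕ) :
    Set (Fin m × Fin n) :=
  {ij | ij.1 ∈ S ij.2 ∧ InBlock ℓ b (ij.2 : ℕ) ∧
    ∃ j' : Fin n, InBlock ℓ b (j' : ℕ) ∧ ij.1 ∈ S j' ∧ (j' : ℕ) < (ij.2 : ℕ)}

/-- Tertiary entries of block `b`: nonzero entries `(i,j)` lying in a later block
`B_{b'}` with `b < b' ≤ ⌈k/ℓ⌉`, in a row containing a primary entry of `B_b`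
(equivalently, a row meeting `B_b`). -/
def TertiaryEntries {n m : ℕ} (S : Fin n → Finset (Fin m)) (ℓ b k : ℕ) :
    Set (Fin m × Fin n) :=
  {ij | ij.1 ∈ S ij.2 ∧ b * ℓ ≤ (ij.2 : ℕ) ∧ (ij.2 : ℕ) < ((k + ℓ - 1) / ℓ) * ℓ ∧
    ∃ j₀ : Fin n, InBlock ℓ b (j₀ : ℕ) ∧ ij.1 ∈ S j₀}

open Finset

section NonleadingEntries

variable {α ι : Type*} [DecidableEq α] [Fintype α] [Fintype ι] [LinearOrder ι]

def nonleadingEntries (S : ι → Finset α) (T : Finset ι) : Finset (α × ι) :=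
  {ij | ij.2 ∈ T ∧ ij.1 ∈ S ij.2 ∧ ∃ j' ∈ T, j' < ij.2 ∧ ij.1 ∈ S j'}

@[simp]
theorem mem_nonleadingEntries {S : ι → Finset α} {T : Finset ι} {ij : α × ι} :
    ij ∈ nonleadingEntries S T ↔ ij.2 ∈ T ∧ ij.1 ∈ S ij.2 ∧ ∃ j' ∈ T, j' < ij.2 ∧ ij.1 ∈ S j' := by
  simp [nonleadingEntries]

theorem nonleadingEntries_insert_of_forall_lt (S : ι → Finset α) {T : Finset ι} {a : ι}
    (ha : ∀ j ∈ T, j < a) :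
    nonleadingEntries S (insert a T) =
      nonleadingEntries S T ∪ (S a ∩ T.biUnion S).image (·, a) := by
  ext ⟨i, j⟩
  simp only [mem_nonleadingEntries, mem_insert, mem_union, mem_image, mem_inter, mem_biUnion,
    Prod.mk.injEq]
  constructor
  · rintro ⟨rfl | hj, hij, j', rfl | hj', hlt, hij'⟩
    · exact absurd hlt (lt_irrefl _)
    · exact Or.inr ⟨i, ⟨hij, j', hj', hij'⟩, rfl, rfl⟩
    · exact absurd (hlt.trans (ha j hj)) (lt_irrefl _)
    · exact Or.inl ⟨hj, hij, j', hj', hlt, hij'⟩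
  · rintro (⟨hj, hij, j', hj', hlt, hij'⟩ | ⟨i, ⟨hia, j', hj', hij'⟩, rfl, rfl⟩)
    · exact ⟨Or.inr hj, hij, j', Or.inr hj', hlt, hij'⟩
    · exact ⟨Or.inl rfl, hia, j', Or.inr hj', ha j' hj', hij'⟩

theorem card_nonleadingEntries_add_card_biUnion (S : ι → Finset α) (T : Finset ι) :
    #(nonleadingEntries S T) + #(T.biUnion S) = ∑ j ∈ T, #(S j) := by
  induction T using Finset.induction_on_max with
  | empty => simp [nonleadingEntries]
  | insert a T ha ih =>
    have hdisj : Disjoint (nonleadingEntries S T) ((S a ∩ T.biUnion S).image (·, a)) := by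
      simp only [disjoint_left, mem_nonleadingEntries, mem_image, not_exists, not_and]
      rintro ⟨i, j⟩ ⟨hj, -⟩ i' - h
      obtain ⟨-, rfl⟩ := Prod.mk.inj h
      exact lt_irrefl _ (ha _ hj)
    have hnew := card_union_add_card_inter (S a) (T.biUnion S)
    rw [nonleadingEntries_insert_of_forall_lt S ha, card_union_of_disjoint hdisj,
      card_image_of_injective _ (Prod.mk_left_injective a), biUnion_insert,
      sum_insert fun h => lt_irrefl _ (ha a h)]
    omega

theorem card_nonleadingEntries_le_of_expansion {S : ι → Finset α} {T : Finset ι} {d : ℕ} {δ : ℝ}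
    (hdeg : ∀ j ∈ T, #(S j) = d) (hT : (1 - δ) * d * #T ≤ #(T.biUnion S)) :
    (#(nonleadingEntries S T) : ℝ) ≤ δ * d * #T := by
  have hcount := card_nonleadingEntries_add_card_biUnion S T
  rw [sum_const_nat hdeg] at hcount
  have : (#(nonleadingEntries S T) : ℝ) + #(T.biUnion S) = #T * d := by exact_mod_cast hcount
  linarith

end NonleadingEntries

theorem Set.ncard_le_card_of_subset_finset {α : Type*} {A : Set α} {s : Finset α}
    (h : A ⊆ s) : A.ncard ≤ #s :=
  (Set.ncard_coe_finset s) ▸ Set.ncard_le_ncard h s.finite_toSet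

section Blocks

variable {n m d ℓ b : ℕ} {δ : ℝ} {S : Fin n → Finset (Fin m)}

theorem card_le_of_forall_val_mem_Ico {s : Finset (Fin n)} {a c : ℕ}
    (h : ∀ j ∈ s, (j : ℕ) ∈ Ico a c) : #s ≤ c - a := by
  simpa using card_le_card_of_injOn Fin.val h Fin.val_injective.injOn

instance (ℓ b j : ℕ) : Decidable (InBlock ℓ b j) :=
  inferInstanceAs (Decidable (_ ∧ _))

def blockColumns (n ℓ b : ℕ) : Finset (Fin n) := {j | InBlock ℓ b j}

@[simp]
theorem mem_blockColumns {ℓ b : ℕ} {j : Fin n} : j ∈ blockColumns n ℓ b ↔ InBlock ℓ b j := by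
  simp [blockColumns]

theorem card_blockColumns_le (n ℓ b : ℕ) : #(blockColumns n ℓ b) ≤ ℓ := by
  refine (card_le_of_forall_val_mem_Ico (a := (b - 1) * ℓ) (c := b * ℓ) ?_).trans ?_
  · intro j hj
    exact mem_Ico.2 (mem_blockColumns.1 hj)
  · rw [Nat.sub_mul, one_mul]
    omega

theorem inBlock_div_add_one (hℓ : 0 < ℓ) (j : ℕ) : InBlock ℓ (j / ℓ + 1) j :=
  ⟨by simpa using Nat.div_mul_le_self j ℓ,
    by simpa [add_mul] using Nat.lt_div_mul_add (a := j) hℓ⟩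

theorem secondaryEntries_eq (S : Fin n → Finset (Fin m)) (ℓ b : ℕ) :
    SecondaryEntries S ℓ b = nonleadingEntries S (blockColumns n ℓ b) := by
  ext ⟨i, j⟩
  simp only [SecondaryEntries, Set.mem_ofPred_eq, mem_coe, mem_nonleadingEntries,
    mem_blockColumns, Fin.lt_def]
  constructor
  · rintro ⟨hi, hj, j', hj', hi', hlt⟩
    exact ⟨hj, hi, j', hj', hlt, hi'⟩
  · rintro ⟨hj, hi, j', hj', hlt, hi'⟩
    exact ⟨hi, hj, j', hj', hi', hlt⟩

theorem secondaryEntries_prefix_subset (S : Fin n → Finset (Fin m)) (ℓ b s : ℕ) :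
    {ij ∈ SecondaryEntries S ℓ b | (ij.2 : ℕ) < (b - 1) * ℓ + s} ⊆
      nonleadingEntries S
        ((blockColumns n ℓ b).filter fun j : Fin n => (j : ℕ) < (b - 1) * ℓ + s) := by
  rintro ⟨i, j⟩ ⟨hij, hpre⟩
  rw [secondaryEntries_eq, mem_coe, mem_nonleadingEntries] at hij
  obtain ⟨hj, hi, j', hj', hlt, hi'⟩ := hij
  simp only [mem_coe, mem_nonleadingEntries, mem_filter]
  exact ⟨⟨hj, hpre⟩, hi, j', ⟨hj', (Fin.lt_def.1 hlt).trans hpre⟩, hlt, hi'⟩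

theorem tertiaryEntries_prefix_subset (S : Fin n → Finset (Fin m)) (hℓ : 0 < ℓ) (hb : 1 ≤ b)
    (k s : ℕ) :
    {ij ∈ TertiaryEntries S ℓ b k | (ij.2 : ℕ) < (b - 1) * ℓ + s} ⊆
      ((Ioc b (b + s / ℓ)).biUnion fun b' =>
        nonleadingEntries S (blockColumns n ℓ b ∪ blockColumns n ℓ b') : Finset _) := by
  rintro ⟨i, j⟩ ⟨⟨hi, hj, -, j₀, hj₀, hi₀⟩, hpre : (j : ℕ) < (b - 1) * ℓ + s⟩
  have hbℓ : (b - 1) * ℓ + ℓ = b * ℓ := by rw [← add_one_mul, Nat.sub_add_cancel hb]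
  simp only [coe_biUnion, Set.mem_iUnion, mem_coe, mem_Ioc, mem_nonleadingEntries, mem_union,
    mem_blockColumns]
  refine ⟨(j : ℕ) / ℓ + 1, ⟨?_, ?_⟩, Or.inr (inBlock_div_add_one hℓ j), hi,
    j₀, Or.inl hj₀, ?_, hi₀⟩
  · rw [Nat.lt_add_one_iff]
    exact (Nat.le_div_iff_mul_le hℓ).2 hj
  · rw [← Nat.add_div_right _ hℓ, add_comm b, ← Nat.add_mul_div_right _ _ hℓ]
    exact Nat.div_le_div_right (by omega)
  · exact Fin.lt_def.2 (hj₀.2.trans_le hj)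

theorem sub_one_mul_lt_of_mem_secondaryEntries_union_tertiaryEntries {k : ℕ} {ij : Fin m × Fin n}
    (h : ij ∈ SecondaryEntries S ℓ b ∪ TertiaryEntries S ℓ b k) : (b - 1) * ℓ < ij.2 := by
  rcases h with ⟨-, -, j', hj', -, hlt⟩ | ⟨-, hj, -, j₀, hj₀, -⟩
  · exact hj'.1.trans_lt hlt
  · exact hj₀.1.trans_lt (hj₀.2.trans_le hj)

variable (hδ : 0 ≤ δ) (hdeg : ∀ j, #(S j) = d)
  (hexp : ∀ T : Finset (Fin n), #T ≤ 2 * ℓ → ((1 - δ) * d * #T : ℝ) ≤ #(T.biUnion S))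
include hδ hdeg hexp

theorem card_nonleadingEntries_le_of_card_le {T : Finset (Fin n)} (hT : #T ≤ 2 * ℓ) {c : ℕ}
    (hc : #T ≤ c) : (#(nonleadingEntries S T) : ℝ) ≤ δ * d * c :=
  (card_nonleadingEntries_le_of_expansion (fun j _ => hdeg j) (hexp T hT)).trans
    (by gcongr)

theorem ncard_secondaryEntries_prefix_le (s : ℕ) :
    (Set.ncard {ij ∈ SecondaryEntries S ℓ b | (ij.2 : ℕ) < (b - 1) * ℓ + s} : ℝ) ≤ δ * d * s := by
  set T := (blockColumns n ℓ b).filter fun j : Fin n => (j : ℕ) < (b - 1) * ℓ + s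
  have hTℓ : #T ≤ ℓ := (card_filter_le _ _).trans (card_blockColumns_le n ℓ b)
  have hTs : #T ≤ s := by
    refine (card_le_of_forall_val_mem_Ico (a := (b - 1) * ℓ) (c := (b - 1) * ℓ + s)
      fun j hj => ?_).trans (by omega)
    obtain ⟨hj, hpre⟩ := mem_filter.1 hj
    exact mem_Ico.2 ⟨(mem_blockColumns.1 hj).1, hpre⟩
  exact (Nat.cast_le.2 (Set.ncard_le_card_of_subset_finset
    (secondaryEntries_prefix_subset S ℓ b s))).trans
    (card_nonleadingEntries_le_of_card_le hδ hdeg hexp (by omega : #T ≤ 2 * ℓ) hTs)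

theorem ncard_tertiaryEntries_prefix_le (hℓ : 0 < ℓ) (hb : 1 ≤ b) (k s : ℕ) :
    (Set.ncard {ij ∈ TertiaryEntries S ℓ b k | (ij.2 : ℕ) < (b - 1) * ℓ + s} : ℝ) ≤
      2 * δ * d * s := by
  have hpair (b' : ℕ) : #(blockColumns n ℓ b ∪ blockColumns n ℓ b') ≤ 2 * ℓ :=
    (card_union_le _ _).trans
      (by linarith [card_blockColumns_le n ℓ b, card_blockColumns_le n ℓ b'])
  have hblocks : ((s / ℓ * ℓ : ℕ) : ℝ) ≤ s := by exact_mod_cast Nat.div_mul_le_self s ℓ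
  calc (Set.ncard {ij ∈ TertiaryEntries S ℓ b k | (ij.2 : ℕ) < (b - 1) * ℓ + s} : ℝ)
      ≤ ∑ b' ∈ Ioc b (b + s / ℓ),
          (#(nonleadingEntries S (blockColumns n ℓ b ∪ blockColumns n ℓ b')) : ℝ) := by
        exact_mod_cast (Set.ncard_le_card_of_subset_finset
          (tertiaryEntries_prefix_subset S hℓ hb k s)).trans card_biUnion_le
    _ ≤ ∑ _b' ∈ Ioc b (b + s / ℓ), δ * d * (2 * ℓ : ℕ) :=
        sum_le_sum fun b' _ =>
          card_nonleadingEntries_le_of_card_le hδ hdeg hexp (hpair b') (hpair b')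
    _ = 2 * δ * d * (s / ℓ * ℓ : ℕ) := by
        rw [sum_const, Nat.card_Ioc, Nat.add_sub_cancel_left, nsmul_eq_mul]
        push_cast
        ring_nf
    _ ≤ 2 * δ * d * s := by gcongr

theorem ncard_secondary_union_tertiary_prefix_le (hℓ : 0 < ℓ) (hb : 1 ≤ b) (k s : ℕ) :
    (Set.ncard {ij ∈ SecondaryEntries S ℓ b ∪ TertiaryEntries S ℓ b k |
        (ij.2 : ℕ) < (b - 1) * ℓ + s} : ℝ) ≤ 3 * δ * d * s := by
  calc _ ≤ (Set.ncard {ij ∈ SecondaryEntries S ℓ b | (ij.2 : ℕ) < (b - 1) * ℓ + s} : ℝ) +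
        Set.ncard {ij ∈ TertiaryEntries S ℓ b k | (ij.2 : ℕ) < (b - 1) * ℓ + s} := by
        exact_mod_cast (congrArg Set.ncard Set.sep_union).trans_le (Set.ncard_union_le _ _)
    _ ≤ δ * d * s + 2 * δ * d * s :=
        add_le_add (ncard_secondaryEntries_prefix_le hδ hdeg hexp s)
          (ncard_tertiaryEntries_prefix_le hδ hdeg hexp hℓ hb k s)
    _ = 3 * δ * d * s := by ring

end Blocks

theorem expander_secondary_tertiary_bounds_general
    (n m d ℓ k b : ℕ) (δ : ℝ) (hδ0 : 0 < δ)
    (hℓ : 1 ≤ ℓ) (hb1 : 1 ≤ b)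
    (S : Fin n → Finset (Fin m))
    (hdeg : ∀ j, (S j).card = d)
    (hexp : ∀ T : Finset (Fin n), T.card ≤ 2 * ℓ →
      ((1 - δ) * d * T.card : ℝ) ≤ ((T.biUnion S).card : ℝ)) :
    (∀ t : ℕ, 1 ≤ t →
      (Set.ncard {ij ∈ SecondaryEntries S ℓ b ∪ TertiaryEntries S ℓ b k |
          (ij.2 : ℕ) + 1 ≤ (b - 1) * ℓ + t} : ℝ) ≤
        if t = 1 then 0 else 3 * δ * d * t) ∧
    (Set.ncard (SecondaryEntries S ℓ b) : ℝ) ≤ δ * d * ℓ := by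
  refine ⟨fun t _ => ?_, ?_⟩
  · simp only [Nat.add_one_le_iff]
    split_ifs with ht1
    · subst ht1
      have hempty : {ij ∈ SecondaryEntries S ℓ b ∪ TertiaryEntries S ℓ b k |
          (ij.2 : ℕ) < (b - 1) * ℓ + 1} = ∅ :=
        Set.eq_empty_of_forall_notMem fun ij ⟨hij, hpre⟩ =>
          (sub_one_mul_lt_of_mem_secondaryEntries_union_tertiaryEntries hij).not_ge
            (Nat.lt_add_one_iff.1 hpre)
      rw [hempty, Set.ncard_empty, Nat.cast_zero]
    · exact ncard_secondary_union_tertiary_prefix_le hδ0.le hdeg hexp hℓ hb1 k t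
  · rw [secondaryEntries_eq, Set.ncard_coe_finset]
    exact card_nonleadingEntries_le_of_card_le hδ0.le hdeg hexp
      ((card_blockColumns_le n ℓ b).trans (by omega)) (card_blockColumns_le n ℓ b)

/-- Expansion bounds on secondary/tertiary entries: for a `(2ℓ,d,δ)`-expander,
the prefix `{(i,j) ∈ D_b ∪ D'_b : j ≤ (b-1)ℓ + t}` is empty for `t = 1` and has at most
`3δdt` elements for `t > 1`; moreover `|D_b| ≤ δdℓ`. (Columns are numbered from `0`,
so the prefix condition `j + 1 ≤ (b-1)ℓ + t` matches the paper's `1`-based `j ≤ (b-1)ℓ+t`.) -/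
theorem expander_secondary_tertiary_bounds
    (n m d ℓ k b : ℕ) (δ : ℝ) (hδ0 : 0 < δ) (hδ1 : δ < 1 / 2)
    (hℓ : 1 ≤ ℓ) (hk : 1 ≤ k) (hkn : k ≤ n)
    (hb1 : 1 ≤ b) (hb2 : b ≤ (k + ℓ - 1) / ℓ)
    (S : Fin n → Finset (Fin m))
    (hdeg : ∀ j, (S j).card = d)
    (hexp : ∀ T : Finset (Fin n), T.card ≤ 2 * ℓ →
      ((1 - δ) * d * T.card : ℝ) ≤ ((T.biUnion S).card : ℝ)) :
    (∀ t : ℕ, 1 ≤ t →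
      (Set.ncard {ij ∈ SecondaryEntries S ℓ b ∪ TertiaryEntries S ℓ b k |
          (ij.2 : ℕ) + 1 ≤ (b - 1) * ℓ + t} : ℝ) ≤
        if t = 1 then 0 else 3 * δ * d * t) ∧
    (Set.ncard (SecondaryEntries S ℓ b) : ℝ) ≤ δ * d * ℓ :=
  expander_secondary_tertiary_bounds_general n m d ℓ k b δ hδ0 hℓ hb1 S hdeg hexp
end

section
/- Let h ∈ ℝ^n, let S ⊆ [n] with |S| = k, and partition [n] \ S into consecutive sets T_0, T_1, T_2, … each of size αk, ordered by decreasing |h| (T_0 contains the αk largest coordinates of h outside S, etc.). If ‖h_{S̄}‖_1 ≤ ‖h_S‖_1 + 2‖x_{S̄}‖_1 for some vector x, then for every 1 ≤ p ≤ ∞: Σ_{i ≥ 1} ‖h_{T_i}‖_p ≤ α^{-(1-1/p)} · (‖h_S‖_p + 2‖x_{S̄}‖_1 / k^{1-1/p}). -/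
/-!
Each block after the first is dominated coordinatewise by the average of the preceding one,
so its `ℓ_p` norm is at most `(αk)^{1/p-1}` times the `ℓ_1` norm of its predecessor. Summing,
the blocks `T_1, T_2, …` are controlled by `(αk)^{1/p-1} ‖h_{S̄}‖₁`, and the cone constraint
together with Hölder's inequality `‖h_S‖₁ ≤ k^{1-1/p} ‖h_S‖_p` gives the bound.
-/

open Finset

namespace Finset

variable {ι κ : Type*} {f : ι → ℝ} {p : ℝ}

lemma le_sum_div_card_of_forall_le {A : Finset ι} {c : ℝ} (hA : A.Nonempty)
    (hc : ∀ v ∈ A, c ≤ f v) : c ≤ (∑ v ∈ A, f v) / #A := by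
  rw [le_div_iff₀ (by exact_mod_cast hA.card_pos), mul_comm, ← nsmul_eq_mul]
  exact card_nsmul_le_sum A f c hc

lemma rpow_sum_rpow_le_card_rpow_mul {B : Finset ι} {M : ℝ} (hp : 0 < p)
    (hf : ∀ j ∈ B, 0 ≤ f j) (hM₀ : 0 ≤ M) (hM : ∀ j ∈ B, f j ≤ M) :
    (∑ j ∈ B, f j ^ p) ^ (1 / p) ≤ (#B : ℝ) ^ (1 / p) * M := by
  have hsum : ∑ j ∈ B, f j ^ p ≤ #B * M ^ p := by
    rw [← nsmul_eq_mul]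
    exact sum_le_card_nsmul B _ _ fun j hj => Real.rpow_le_rpow (hf j hj) (hM j hj) hp.le
  calc (∑ j ∈ B, f j ^ p) ^ (1 / p) ≤ ((#B : ℝ) * M ^ p) ^ (1 / p) :=
        Real.rpow_le_rpow (sum_nonneg fun j hj => Real.rpow_nonneg (hf j hj) _) hsum
          (by positivity)
    _ = (#B : ℝ) ^ (1 / p) * M := by
        rw [Real.mul_rpow (by positivity) (by positivity), ← Real.rpow_mul hM₀,
          mul_one_div_cancel hp.ne', Real.rpow_one]

lemma rpow_sum_rpow_le_rpow_mul_sum_of_forall_le {A B : Finset ι} {m : ℕ} (hp : 0 < p)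
    (hf : ∀ j, 0 ≤ f j) (hB : #B ≤ m) (hA : B.Nonempty → #A = m)
    (hdom : ∀ u ∈ B, ∀ v ∈ A, f u ≤ f v) :
    (∑ j ∈ B, f j ^ p) ^ (1 / p) ≤ (m : ℝ) ^ (1 / p - 1) * ∑ j ∈ A, f j := by
  rcases B.eq_empty_or_nonempty with rfl | hB'
  · rw [sum_empty, Real.zero_rpow (by positivity)]
    exact mul_nonneg (by positivity) (sum_nonneg fun j _ => hf j)
  obtain rfl := hA hB'
  have hA' : A.Nonempty := card_pos.1 (hB'.card_pos.trans_le hB)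
  have hA₀ : (0 : ℝ) < #A := by exact_mod_cast hA'.card_pos
  have havg : 0 ≤ (∑ v ∈ A, f v) / #A := div_nonneg (sum_nonneg fun v _ => hf v) hA₀.le
  calc (∑ j ∈ B, f j ^ p) ^ (1 / p)
      ≤ (#B : ℝ) ^ (1 / p) * ((∑ v ∈ A, f v) / #A) :=
        rpow_sum_rpow_le_card_rpow_mul hp (fun j _ => hf j) havg
          fun u hu => le_sum_div_card_of_forall_le hA' (hdom u hu)
    _ ≤ (#A : ℝ) ^ (1 / p) * ((∑ v ∈ A, f v) / #A) := by gcongr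
    _ = (#A : ℝ) ^ (1 / p - 1) * ∑ j ∈ A, f j := by
        rw [Real.rpow_sub_one hA₀.ne']
        ring

lemma sum_le_card_rpow_mul_rpow_sum_rpow {s : Finset ι} (hp : 1 ≤ p)
    (hf : ∀ j ∈ s, 0 ≤ f j) :
    ∑ j ∈ s, f j ≤ (#s : ℝ) ^ (1 - 1 / p) * (∑ j ∈ s, f j ^ p) ^ (1 / p) := by
  have hp₀ : 0 < p := by linarith
  have hsum : 0 ≤ ∑ j ∈ s, f j := sum_nonneg hf
  calc ∑ j ∈ s, f j = ((∑ j ∈ s, f j) ^ p) ^ (1 / p) := by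
        rw [← Real.rpow_mul hsum, mul_one_div_cancel hp₀.ne', Real.rpow_one]
    _ ≤ ((#s : ℝ) ^ (p - 1) * ∑ j ∈ s, f j ^ p) ^ (1 / p) :=
        Real.rpow_le_rpow (Real.rpow_nonneg hsum _)
          (Real.rpow_sum_le_const_mul_sum_rpow_of_nonneg s hp hf) (by positivity)
    _ = (#s : ℝ) ^ (1 - 1 / p) * (∑ j ∈ s, f j ^ p) ^ (1 / p) := by
        rw [Real.mul_rpow (by positivity)
            (sum_nonneg fun j hj => Real.rpow_nonneg (hf j hj) _), ← Real.rpow_mul (by positivity)]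
        congr 2
        field_simp

lemma sum_sum_le_sum_of_pairwiseDisjoint {s : Finset ι} {I : Finset κ} {T : κ → Finset ι}
    (hf : ∀ j ∈ s, 0 ≤ f j) (hdisj : (I : Set κ).PairwiseDisjoint T) (hT : ∀ i ∈ I, T i ⊆ s) :
    ∑ i ∈ I, ∑ j ∈ T i, f j ≤ ∑ j ∈ s, f j := by
  classical
  rw [← sum_biUnion hdisj]
  exact sum_le_sum_of_subset_of_nonneg (biUnion_subset.2 hT) fun j hj _ => hf j hj

end Finset

theorem shelling_bound_general (n k a : ℕ) (hk : 1 ≤ k)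
    (α : ℝ) (hα : α * k = (a : ℝ))
    (h x : Fin n → ℝ) (S : Finset (Fin n)) (hS : S.card = k)
    (T : ℕ → Finset (Fin n))
    (hTdisj : ∀ i j, i ≠ j → Disjoint (T i) (T j))
    (hTS : ∀ i, Disjoint S (T i))
    (hTcard : ∀ i, (T i).card ≤ a)
    (hTfull : ∀ i, (T (i + 1)).Nonempty → (T i).card = a)
    (hTorder : ∀ i, ∀ u ∈ T (i + 1), ∀ v ∈ T i, |h u| ≤ |h v|)
    (p : ℝ) (hp : 1 ≤ p)
    (hcone : ∑ j ∈ Sᶜ, |h j| ≤ ∑ j ∈ S, |h j| + 2 * ∑ j ∈ Sᶜ, |x j|) :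
    ∑' i : ℕ, (∑ j ∈ T (i + 1), |h j| ^ p) ^ (1 / p) ≤
      α ^ (-(1 - 1 / p)) *
        ((∑ j ∈ S, |h j| ^ p) ^ (1 / p) +
          2 * (∑ j ∈ Sᶜ, |x j|) / (k : ℝ) ^ (1 - 1 / p)) := by
  have hp₀ : 0 < p := by linarith
  have hk₀ : (0 : ℝ) < k := by exact_mod_cast hk
  have hα₀ : 0 ≤ α := nonneg_of_mul_nonneg_left (hα ▸ a.cast_nonneg) hk₀
  have hscale : (a : ℝ) ^ (1 / p - 1) = α ^ (-(1 - 1 / p)) / (k : ℝ) ^ (1 - 1 / p) := by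
    rw [← hα, show 1 / p - 1 = -(1 - 1 / p) by ring, Real.mul_rpow hα₀ hk₀.le,
      Real.rpow_neg hk₀.le, ← div_eq_mul_inv]
  have hblock (i : ℕ) : (∑ j ∈ T (i + 1), |h j| ^ p) ^ (1 / p) ≤
      (a : ℝ) ^ (1 / p - 1) * ∑ j ∈ T i, |h j| :=
    rpow_sum_rpow_le_rpow_mul_sum_of_forall_le hp₀ (fun j => abs_nonneg (h j)) (hTcard _)
      (hTfull i) (hTorder i)
  have hholder : ∑ j ∈ S, |h j| ≤ (k : ℝ) ^ (1 - 1 / p) * (∑ j ∈ S, |h j| ^ p) ^ (1 / p) :=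
    hS ▸ sum_le_card_rpow_mul_rpow_sum_rpow hp fun j _ => abs_nonneg (h j)
  refine Real.tsum_le_of_sum_range_le (fun i => by positivity) fun N => ?_
  calc ∑ i ∈ range N, (∑ j ∈ T (i + 1), |h j| ^ p) ^ (1 / p)
      ≤ ∑ i ∈ range N, (a : ℝ) ^ (1 / p - 1) * ∑ j ∈ T i, |h j| := sum_le_sum fun i _ => hblock i
    _ = (a : ℝ) ^ (1 / p - 1) * ∑ i ∈ range N, ∑ j ∈ T i, |h j| := (mul_sum ..).symm
    _ ≤ (a : ℝ) ^ (1 / p - 1) * ∑ j ∈ Sᶜ, |h j| := by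
        gcongr
        exact sum_sum_le_sum_of_pairwiseDisjoint (fun j _ => abs_nonneg _)
          (fun i _ j _ hij => hTdisj i j hij) fun i _ => subset_compl_iff_disjoint_left.2 (hTS i)
    _ ≤ (a : ℝ) ^ (1 / p - 1) *
          ((k : ℝ) ^ (1 - 1 / p) * (∑ j ∈ S, |h j| ^ p) ^ (1 / p) + 2 * ∑ j ∈ Sᶜ, |x j|) := by
        gcongr
        linarith
    _ = _ := by
        rw [hscale]
        field_simp

/-- Shelling bound: if `[n] \ S` is partitioned into consecutive blocks `T_0, T_1, …`
of size `αk` ordered by decreasing `|h|`, and the cone constraint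
`‖h_{S̄}‖₁ ≤ ‖h_S‖₁ + 2‖x_{S̄}‖₁` holds, then for `1 ≤ p < ∞`,
`Σ_{i ≥ 1} ‖h_{T_i}‖_p ≤ α^{-(1-1/p)} (‖h_S‖_p + 2‖x_{S̄}‖₁/k^{1-1/p})`. -/
theorem shelling_bound (n k a : ℕ) (hk : 1 ≤ k) (ha : 1 ≤ a)
    (α : ℝ) (hα : α * k = (a : ℝ))
    (h x : Fin n → ℝ) (S : Finset (Fin n)) (hS : S.card = k)
    (T : ℕ → Finset (Fin n))
    (hTdisj : ∀ i j, i ≠ j → Disjoint (T i) (T j))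
    (hTS : ∀ i, Disjoint S (T i))
    (hTcover : ∀ j : Fin n, j ∉ S → ∃ i, j ∈ T i)
    (hTcard : ∀ i, (T i).card ≤ a)
    (hTfull : ∀ i, (T (i + 1)).Nonempty → (T i).card = a)
    (hTorder : ∀ i, ∀ u ∈ T (i + 1), ∀ v ∈ T i, |h u| ≤ |h v|)
    (p : ℝ) (hp : 1 ≤ p)
    (hcone : ∑ j ∈ Sᶜ, |h j| ≤ ∑ j ∈ S, |h j| + 2 * ∑ j ∈ Sᶜ, |x j|) :
    ∑' i : ℕ, (∑ j ∈ T (i + 1), |h j| ^ p) ^ (1 / p) ≤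
      α ^ (-(1 - 1 / p)) *
        ((∑ j ∈ S, |h j| ^ p) ^ (1 / p) +
          2 * (∑ j ∈ Sᶜ, |x j|) / (k : ℝ) ^ (1 - 1 / p)) :=
  shelling_bound_general n k a hk α hα h x S hS T hTdisj hTS hTcard hTfull hTorder p hp hcone
end
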